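/- arXiv:2604.19703 — 4 statements merged into one kernel-verified Lean document; each statement's English description precedes it below -/
import Mathlib

section
/- If all Lᵢ are even and Lᵢ ≥ 4, then the graph Q³(L₁,L₂,L₃) admits a decomposition of its edge set into edge-disjoint 4-cycles, i.e. there exists a partition of E into sets of 4 edges each of which forms a cycle of length 4. -/
/-- The cycle graph of length `L` on `ZMod L`: `x` and `y` adjacent iff they differ by `1`. -/
def cycleG (L : ℕ) : SimpleGraph (ZMod L) :=
  SimpleGraph.fromRel (fun x y => x - y = 1)

/-- Vertex set of the cubic lattice with periodic boundary conditions. -/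
abbrev QV (L₁ L₂ L₃ : ℕ) := ZMod L₁ × ZMod L₂ × ZMod L₃

/-- `Q³(L₁,L₂,L₃)`, the Cartesian (box) product of three cycles. -/
def Q3 (L₁ L₂ L₃ : ℕ) : SimpleGraph (QV L₁ L₂ L₃) :=
  (cycleG L₁).boxProd ((cycleG L₂).boxProd (cycleG L₃))

/-- `s` is the edge set of a cycle of length 4 in `G`. -/
def IsFourCycleEdgeSet {V : Type*} (G : SimpleGraph V) (s : Set (Sym2 V)) : Prop :=
  ∃ (v : V) (w : G.Walk v v), w.IsCycle ∧ w.length = 4 ∧ {e | e ∈ w.edges} = s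

/-- A 4-cycle decomposition of `G`: a partition of the edge set of `G` into
edge sets of cycles of length 4. -/
def IsFourCycleDecomp {V : Type*} (G : SimpleGraph V) (D : Set (Set (Sym2 V))) : Prop :=
  (∀ s ∈ D, IsFourCycleEdgeSet G s) ∧ D.Pairwise Disjoint ∧ ⋃₀ D = G.edgeSet


namespace Q3P
open SimpleGraph

variable {L₁ L₂ L₃ : ℕ}

section
variable (L₁ L₂ L₃)
def face (k : ℕ) (x : ZMod L₁) (y : ZMod L₂) (z : ZMod L₃) : Set (Sym2 (QV L₁ L₂ L₃)) :=
  match k with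
  | 0 => {s((x,y,z),(x+1,y,z)), s((x+1,y,z),(x+1,y+1,z)), s((x+1,y+1,z),(x,y+1,z)), s((x,y+1,z),(x,y,z))}
  | 1 => {s((x,y,z),(x,y+1,z)), s((x,y+1,z),(x,y+1,z+1)), s((x,y+1,z+1),(x,y,z+1)), s((x,y,z+1),(x,y,z))}
  | 2 => {s((x,y,z),(x,y,z+1)), s((x,y,z+1),(x+1,y,z+1)), s((x+1,y,z+1),(x+1,y,z)), s((x+1,y,z),(x,y,z))}
  | _ => ∅
end


lemma cyc_adj {L : ℕ} (h1 : (1 : ZMod L) ≠ 0) (x : ZMod L) : (cycleG L).Adj x (x+1) :=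
  ⟨fun h => h1 (left_eq_add.mp h), Or.inr (by ring)⟩

lemma adj1 (h1 : (1 : ZMod L₁) ≠ 0) (x : ZMod L₁) (y : ZMod L₂) (z : ZMod L₃) :
    (Q3 L₁ L₂ L₃).Adj (x,y,z) (x+1,y,z) := Or.inl ⟨cyc_adj h1 x, rfl⟩

lemma adj2 (h1 : (1 : ZMod L₂) ≠ 0) (x : ZMod L₁) (y : ZMod L₂) (z : ZMod L₃) :
    (Q3 L₁ L₂ L₃).Adj (x,y,z) (x,y+1,z) := Or.inr ⟨Or.inl ⟨cyc_adj h1 y, rfl⟩, rfl⟩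

lemma adj3 (h1 : (1 : ZMod L₃) ≠ 0) (x : ZMod L₁) (y : ZMod L₂) (z : ZMod L₃) :
    (Q3 L₁ L₂ L₃).Adj (x,y,z) (x,y,z+1) := Or.inr ⟨Or.inr ⟨cyc_adj h1 z, rfl⟩, rfl⟩

variable (f₁ : ZMod L₁ →+* ZMod 2) (f₂ : ZMod L₂ →+* ZMod 2) (f₃ : ZMod L₃ →+* ZMod 2)

def cond (k : ℕ) (x : ZMod L₁) (y : ZMod L₂) (z : ZMod L₃) : Prop :=
  match k with
  | 0 => f₁ x = 1 ∧ f₂ y = 0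
  | 1 => f₂ y = 1 ∧ f₃ z = 0
  | 2 => f₃ z = 1 ∧ f₁ x = 0
  | _ => False

def own1 (x : ZMod L₁) (y : ZMod L₂) (z : ZMod L₃) : ℕ × QV L₁ L₂ L₃ :=
  if f₁ x = 1 then (0, x, (if f₂ y = 0 then y else y - 1), z)
  else (2, x, y, (if f₃ z = 1 then z else z - 1))
def own2 (x : ZMod L₁) (y : ZMod L₂) (z : ZMod L₃) : ℕ × QV L₁ L₂ L₃ :=
  if f₂ y = 1 then (1, x, y, (if f₃ z = 0 then z else z - 1))
  else (0, (if f₁ x = 1 then x else x - 1), y, z)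
def own3 (x : ZMod L₁) (y : ZMod L₂) (z : ZMod L₃) : ℕ × QV L₁ L₂ L₃ :=
  if f₃ z = 1 then (2, (if f₁ x = 0 then x else x - 1), y, z)
  else (1, x, (if f₂ y = 1 then y else y - 1), z)


lemma fsub {L : ℕ} (f : ZMod L →+* ZMod 2) (a : ZMod L) : f a = f (a-1) + 1 := by
  conv_lhs => rw [show a = (a-1)+1 by ring]
  rw [map_add, map_one]

lemma fs0 {L : ℕ} {f : ZMod L →+* ZMod 2} {a : ZMod L} (h : f (a-1) = 0) : f a = 1 := by
  rw [fsub f a, h]; decide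

lemma fs1 {L : ℕ} {f : ZMod L →+* ZMod 2} {a : ZMod L} (h : f (a-1) = 1) : f a = 0 := by
  rw [fsub f a, h]; decide

lemma helper1 (h1₁ : (1:ZMod L₁) ≠ 0) (h2₁ : (2:ZMod L₁) ≠ 0) (h1₂ : (1:ZMod L₂) ≠ 0)
    {k : ℕ} {x' : ZMod L₁} {y' : ZMod L₂} {z' : ZMod L₃}
    (hc : cond f₁ f₂ f₃ k x' y' z') (x : ZMod L₁) (y : ZMod L₂) (z : ZMod L₃)
    (hm : s(((x,y,z) : QV L₁ L₂ L₃),(x+1,y,z)) ∈ face L₁ L₂ L₃ k x' y' z') :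
    (k, x', y', z') = own1 f₁ f₂ f₃ x y z := by
  rcases k with _|_|_|k
  · obtain ⟨hcx, hcy⟩ := hc
    simp only [face, Set.mem_insert_iff, Set.mem_singleton_iff, Sym2.eq_iff, Prod.mk.injEq] at hm
    rcases hm with (⟨⟨hx,hy,hz⟩,-⟩|⟨⟨hx,-,-⟩,hx2,-,-⟩) |
      (⟨⟨-,hy,-⟩,-,hy2,-⟩|⟨⟨-,hy,-⟩,-,hy2,-⟩) |
      (⟨⟨hx,-,-⟩,hx2,-,-⟩|⟨⟨hx,hy,hz⟩,-,-,-⟩) |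
      (⟨⟨hx,-,-⟩,hx2,-,-⟩|⟨⟨hx,-,-⟩,hx2,-,-⟩)
    · subst hx hy hz
      simp [own1, hcx, hcy]
    · exact absurd (by linear_combination hx2 - hx) h2₁
    · exact absurd (by linear_combination hy - hy2) h1₂
    · exact absurd (by linear_combination hy2 - hy) h1₂
    · exact absurd (by linear_combination hx2 - hx) h2₁
    · -- top edge: x = x', y = y'+1, z = z'
      have hy' : y' = y - 1 := by linear_combination -hy
      subst hx hz hy'
      have hfy : f₂ y = 1 := fs0 hcy
      simp [own1, hcx, hfy]
    · exact absurd (by linear_combination hx2 - hx) h1₁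
    · exact absurd (by linear_combination hx2 - hx) h1₁
  · exfalso
    simp only [face, Set.mem_insert_iff, Set.mem_singleton_iff, Sym2.eq_iff, Prod.mk.injEq] at hm
    rcases hm with (⟨⟨hx,-,-⟩,hx2,-,-⟩|⟨⟨hx,-,-⟩,hx2,-,-⟩) |
      (⟨⟨hx,-,-⟩,hx2,-,-⟩|⟨⟨hx,-,-⟩,hx2,-,-⟩) |
      (⟨⟨hx,-,-⟩,hx2,-,-⟩|⟨⟨hx,-,-⟩,hx2,-,-⟩) |
      (⟨⟨hx,-,-⟩,hx2,-,-⟩|⟨⟨hx,-,-⟩,hx2,-,-⟩) <;>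
    exact absurd (by linear_combination hx2 - hx) h1₁
  · obtain ⟨hcz, hcx⟩ := hc
    simp only [face, Set.mem_insert_iff, Set.mem_singleton_iff, Sym2.eq_iff, Prod.mk.injEq] at hm
    rcases hm with (⟨⟨hx,-,-⟩,hx2,-,-⟩|⟨⟨hx,-,-⟩,hx2,-,-⟩) |
      (⟨⟨hx,hy,hz⟩,-,-,-⟩|⟨⟨hx,-,-⟩,hx2,-,-⟩) |
      (⟨⟨hx,-,-⟩,hx2,-,-⟩|⟨⟨hx,-,-⟩,hx2,-,-⟩) |
      (⟨⟨hx,-,-⟩,hx2,-,-⟩|⟨⟨hx,hy,hz⟩,-,-,-⟩)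
    · exact absurd (by linear_combination hx2 - hx) h1₁
    · exact absurd (by linear_combination hx2 - hx) h1₁
    · -- m2 case A: x=x', y=y', z=z'+1
      have hz' : z' = z - 1 := by linear_combination -hz
      subst hx hy hz'
      have hfz : f₃ z = 0 := fs1 hcz
      simp [own1, hcx, hfz]
    · exact absurd (by linear_combination hx2 - hx) h2₁
    · exact absurd (by linear_combination hx2 - hx) h1₁
    · exact absurd (by linear_combination hx2 - hx) h1₁
    · exact absurd (by linear_combination hx2 - hx) h2₁
    · -- m4 case B: x=x', y=y', z=z'
      subst hx hy hz
      simp [own1, hcx, hcz]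
  · exact absurd hc (by simp [cond])



lemma helper2 (h1₁ : (1:ZMod L₁) ≠ 0) (h1₂ : (1:ZMod L₂) ≠ 0) (h2₂ : (2:ZMod L₂) ≠ 0)
    {k : ℕ} {x' : ZMod L₁} {y' : ZMod L₂} {z' : ZMod L₃}
    (hc : cond f₁ f₂ f₃ k x' y' z') (x : ZMod L₁) (y : ZMod L₂) (z : ZMod L₃)
    (hm : s(((x,y,z) : QV L₁ L₂ L₃),(x,y+1,z)) ∈ face L₁ L₂ L₃ k x' y' z') :
    (k, x', y', z') = own2 f₁ f₂ f₃ x y z := by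
  rcases k with _|_|_|k
  · obtain ⟨hcx, hcy⟩ := hc
    simp only [face, Set.mem_insert_iff, Set.mem_singleton_iff, Sym2.eq_iff, Prod.mk.injEq] at hm
    rcases hm with (⟨⟨hx,-,-⟩,hx2,-,-⟩|⟨⟨hx,-,-⟩,hx2,-,-⟩) |
      (⟨⟨hx,hy,hz⟩,-,-,-⟩|⟨⟨-,hy,-⟩,-,hy2,-⟩) |
      (⟨⟨hx,-,-⟩,hx2,-,-⟩|⟨⟨hx,-,-⟩,hx2,-,-⟩) |
      (⟨⟨-,hy,-⟩,-,hy2,-⟩|⟨⟨hx,hy,hz⟩,-,-,-⟩)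
    · exact absurd (by linear_combination hx - hx2) h1₁
    · exact absurd (by linear_combination hx2 - hx) h1₁
    · -- e2 A: x = x'+1, y = y', z = z'
      have hx' : x' = x - 1 := by linear_combination -hx
      subst hy hz hx'
      have hfx : f₁ x = 0 := fs1 hcx
      simp [own2, hcy, hfx]
    · exact absurd (by linear_combination hy2 - hy) h2₂
    · exact absurd (by linear_combination hx2 - hx) h1₁
    · exact absurd (by linear_combination hx - hx2) h1₁
    · exact absurd (by linear_combination hy2 - hy) h2₂
    · subst hx hy hz
      simp [own2, hcx, hcy]
  · obtain ⟨hcy, hcz⟩ := hc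
    simp only [face, Set.mem_insert_iff, Set.mem_singleton_iff, Sym2.eq_iff, Prod.mk.injEq] at hm
    rcases hm with (⟨⟨hx,hy,hz⟩,-,-,-⟩|⟨⟨-,hy,-⟩,-,hy2,-⟩) |
      (⟨⟨-,hy,-⟩,-,hy2,-⟩|⟨⟨-,hy,-⟩,-,hy2,-⟩) |
      (⟨⟨-,hy,-⟩,-,hy2,-⟩|⟨⟨hx,hy,hz⟩,-,-,-⟩) |
      (⟨⟨-,hy,-⟩,-,hy2,-⟩|⟨⟨-,hy,-⟩,-,hy2,-⟩)
    · subst hx hy hz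
      simp [own2, hcy, hcz]
    · exact absurd (by linear_combination hy2 - hy) h2₂
    · exact absurd (by linear_combination hy2 - hy) h1₂
    · exact absurd (by linear_combination hy2 - hy) h1₂
    · exact absurd (by linear_combination hy2 - hy) h2₂
    · -- e3 B: x = x', y = y', z = z'+1
      have hz' : z' = z - 1 := by linear_combination -hz
      subst hx hy hz'
      have hfz : f₃ z = 1 := fs0 hcz
      simp [own2, hcy, hfz]
    · exact absurd (by linear_combination hy2 - hy) h1₂
    · exact absurd (by linear_combination hy2 - hy) h1₂
  · exfalso
    simp only [face, Set.mem_insert_iff, Set.mem_singleton_iff, Sym2.eq_iff, Prod.mk.injEq] at hm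
    rcases hm with (⟨⟨-,hy,-⟩,-,hy2,-⟩|⟨⟨-,hy,-⟩,-,hy2,-⟩) |
      (⟨⟨-,hy,-⟩,-,hy2,-⟩|⟨⟨-,hy,-⟩,-,hy2,-⟩) |
      (⟨⟨-,hy,-⟩,-,hy2,-⟩|⟨⟨-,hy,-⟩,-,hy2,-⟩) |
      (⟨⟨-,hy,-⟩,-,hy2,-⟩|⟨⟨-,hy,-⟩,-,hy2,-⟩) <;>
    exact absurd (by linear_combination hy2 - hy) h1₂
  · exact absurd hc (by simp [cond])

lemma helper3 (h1₁ : (1:ZMod L₁) ≠ 0) (h1₂ : (1:ZMod L₂) ≠ 0)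
    (h1₃ : (1:ZMod L₃) ≠ 0) (h2₃ : (2:ZMod L₃) ≠ 0)
    {k : ℕ} {x' : ZMod L₁} {y' : ZMod L₂} {z' : ZMod L₃}
    (hc : cond f₁ f₂ f₃ k x' y' z') (x : ZMod L₁) (y : ZMod L₂) (z : ZMod L₃)
    (hm : s(((x,y,z) : QV L₁ L₂ L₃),(x,y,z+1)) ∈ face L₁ L₂ L₃ k x' y' z') :
    (k, x', y', z') = own3 f₁ f₂ f₃ x y z := by
  rcases k with _|_|_|k
  · exfalso
    simp only [face, Set.mem_insert_iff, Set.mem_singleton_iff, Sym2.eq_iff, Prod.mk.injEq] at hm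
    rcases hm with (⟨⟨-,-,hz⟩,-,-,hz2⟩|⟨⟨-,-,hz⟩,-,-,hz2⟩) |
      (⟨⟨-,-,hz⟩,-,-,hz2⟩|⟨⟨-,-,hz⟩,-,-,hz2⟩) |
      (⟨⟨-,-,hz⟩,-,-,hz2⟩|⟨⟨-,-,hz⟩,-,-,hz2⟩) |
      (⟨⟨-,-,hz⟩,-,-,hz2⟩|⟨⟨-,-,hz⟩,-,-,hz2⟩) <;>
    exact absurd (by linear_combination hz2 - hz) h1₃
  · obtain ⟨hcy, hcz⟩ := hc
    simp only [face, Set.mem_insert_iff, Set.mem_singleton_iff, Sym2.eq_iff, Prod.mk.injEq] at hm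
    rcases hm with (⟨⟨-,hy,-⟩,-,hy2,-⟩|⟨⟨-,hy,-⟩,-,hy2,-⟩) |
      (⟨⟨hx,hy,hz⟩,-,-,-⟩|⟨⟨-,-,hz⟩,-,-,hz2⟩) |
      (⟨⟨-,hy,-⟩,-,hy2,-⟩|⟨⟨-,hy,-⟩,-,hy2,-⟩) |
      (⟨⟨-,-,hz⟩,-,-,hz2⟩|⟨⟨hx,hy,hz⟩,-,-,-⟩)
    · exact absurd (by linear_combination hy - hy2) h1₂
    · exact absurd (by linear_combination hy2 - hy) h1₂
    · -- e2 A: x = x', y = y'+1, z = z'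
      have hy' : y' = y - 1 := by linear_combination -hy
      subst hx hz hy'
      have hfy : f₂ y = 0 := fs1 hcy
      simp [own3, hcz, hfy]
    · exact absurd (by linear_combination hz2 - hz) h2₃
    · exact absurd (by linear_combination hy2 - hy) h1₂
    · exact absurd (by linear_combination hy - hy2) h1₂
    · exact absurd (by linear_combination hz2 - hz) h2₃
    · subst hx hy hz
      simp [own3, hcy, hcz]
  · obtain ⟨hcz, hcx⟩ := hc
    simp only [face, Set.mem_insert_iff, Set.mem_singleton_iff, Sym2.eq_iff, Prod.mk.injEq] at hm
    rcases hm with (⟨⟨hx,hy,hz⟩,-,-,-⟩|⟨⟨-,-,hz⟩,-,-,hz2⟩) |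
      (⟨⟨hx,-,-⟩,hx2,-,-⟩|⟨⟨hx,-,-⟩,hx2,-,-⟩) |
      (⟨⟨-,-,hz⟩,-,-,hz2⟩|⟨⟨hx,hy,hz⟩,-,-,-⟩) |
      (⟨⟨hx,-,-⟩,hx2,-,-⟩|⟨⟨hx,-,-⟩,hx2,-,-⟩)
    · subst hx hy hz
      simp [own3, hcz, hcx]
    · exact absurd (by linear_combination hz2 - hz) h2₃
    · exact absurd (by linear_combination hx - hx2) h1₁
    · exact absurd (by linear_combination hx2 - hx) h1₁
    · exact absurd (by linear_combination hz2 - hz) h2₃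
    · -- e3 B: x = x'+1, y = y', z = z'
      have hx' : x' = x - 1 := by linear_combination -hx
      subst hy hz hx'
      have hfx : f₁ x = 1 := fs0 hcx
      simp [own3, hcz, hfx]
    · exact absurd (by linear_combination hx2 - hx) h1₁
    · exact absurd (by linear_combination hx - hx2) h1₁
  · exact absurd hc (by simp [cond])



lemma zmod2_cases (a : ZMod 2) : a = 0 ∨ a = 1 := by revert a; decide

lemma gs1 {L : ℕ} {f : ZMod L →+* ZMod 2} {a : ZMod L} (h : f a = 1) : f (a-1) = 0 := by
  have := fsub f a; rw [h] at this
  rcases zmod2_cases (f (a-1)) with h' | h'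
  · exact h'
  · rw [h'] at this; exact absurd this (by decide)

lemma gs0 {L : ℕ} {f : ZMod L →+* ZMod 2} {a : ZMod L} (h : f a = 0) : f (a-1) = 1 := by
  have := fsub f a; rw [h] at this
  rcases zmod2_cases (f (a-1)) with h' | h'
  · rw [h'] at this; exact absurd this (by decide)
  · exact h'

lemma exist1 (x : ZMod L₁) (y : ZMod L₂) (z : ZMod L₃) :
    ∃ k x' y' z', cond f₁ f₂ f₃ k x' y' z' ∧
      s(((x,y,z) : QV L₁ L₂ L₃),(x+1,y,z)) ∈ face L₁ L₂ L₃ k x' y' z' := by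
  rcases zmod2_cases (f₁ x) with hx | hx
  · rcases zmod2_cases (f₃ z) with hz | hz
    · refine ⟨2, x, y, z - 1, ⟨gs0 hz, hx⟩, ?_⟩
      simp only [face, Set.mem_insert_iff, Set.mem_singleton_iff]
      right; left
      rw [show z - 1 + 1 = z from by ring]
    · refine ⟨2, x, y, z, ⟨hz, hx⟩, ?_⟩
      simp only [face, Set.mem_insert_iff, Set.mem_singleton_iff]
      right; right; right
      exact Sym2.eq_swap
  · rcases zmod2_cases (f₂ y) with hy | hy
    · exact ⟨0, x, y, z, ⟨hx, hy⟩, by simp [face]⟩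
    · refine ⟨0, x, y - 1, z, ⟨hx, gs1 hy⟩, ?_⟩
      simp only [face, Set.mem_insert_iff, Set.mem_singleton_iff]
      right; right; left
      rw [show y - 1 + 1 = y from by ring]
      exact Sym2.eq_swap

lemma exist2 (x : ZMod L₁) (y : ZMod L₂) (z : ZMod L₃) :
    ∃ k x' y' z', cond f₁ f₂ f₃ k x' y' z' ∧
      s(((x,y,z) : QV L₁ L₂ L₃),(x,y+1,z)) ∈ face L₁ L₂ L₃ k x' y' z' := by
  rcases zmod2_cases (f₂ y) with hy | hy
  · rcases zmod2_cases (f₁ x) with hx | hx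
    · refine ⟨0, x - 1, y, z, ⟨gs0 hx, hy⟩, ?_⟩
      simp only [face, Set.mem_insert_iff, Set.mem_singleton_iff]
      right; left
      rw [show x - 1 + 1 = x from by ring]
    · refine ⟨0, x, y, z, ⟨hx, hy⟩, ?_⟩
      simp only [face, Set.mem_insert_iff, Set.mem_singleton_iff]
      right; right; right
      exact Sym2.eq_swap
  · rcases zmod2_cases (f₃ z) with hz | hz
    · exact ⟨1, x, y, z, ⟨hy, hz⟩, by simp [face]⟩
    · refine ⟨1, x, y, z - 1, ⟨hy, gs1 hz⟩, ?_⟩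
      simp only [face, Set.mem_insert_iff, Set.mem_singleton_iff]
      right; right; left
      rw [show z - 1 + 1 = z from by ring]
      exact Sym2.eq_swap

lemma exist3 (x : ZMod L₁) (y : ZMod L₂) (z : ZMod L₃) :
    ∃ k x' y' z', cond f₁ f₂ f₃ k x' y' z' ∧
      s(((x,y,z) : QV L₁ L₂ L₃),(x,y,z+1)) ∈ face L₁ L₂ L₃ k x' y' z' := by
  rcases zmod2_cases (f₃ z) with hz | hz
  · rcases zmod2_cases (f₂ y) with hy | hy
    · refine ⟨1, x, y - 1, z, ⟨gs0 hy, hz⟩, ?_⟩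
      simp only [face, Set.mem_insert_iff, Set.mem_singleton_iff]
      right; left
      rw [show y - 1 + 1 = y from by ring]
    · refine ⟨1, x, y, z, ⟨hy, hz⟩, ?_⟩
      simp only [face, Set.mem_insert_iff, Set.mem_singleton_iff]
      right; right; right
      exact Sym2.eq_swap
  · rcases zmod2_cases (f₁ x) with hx | hx
    · exact ⟨2, x, y, z, ⟨hz, hx⟩, by simp [face]⟩
    · refine ⟨2, x - 1, y, z, ⟨hz, gs1 hx⟩, ?_⟩
      simp only [face, Set.mem_insert_iff, Set.mem_singleton_iff]
      right; right; left
      rw [show x - 1 + 1 = x from by ring]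
      exact Sym2.eq_swap



lemma fourCycle' {V : Type*} {G : SimpleGraph V} {v0 v1 v2 v3 : V}
    (h01 : G.Adj v0 v1) (h12 : G.Adj v1 v2) (h23 : G.Adj v2 v3) (h30 : G.Adj v3 v0)
    (n02 : v0 ≠ v2) (n13 : v1 ≠ v3) :
    (Walk.cons h01 (Walk.cons h12 (Walk.cons h23 (Walk.cons h30 Walk.nil)))).IsCycle := by
  have n01 := h01.ne; have n12 := h12.ne; have n23 := h23.ne; have n30 := h30.ne
  have n01' := n01.symm; have n12' := n12.symm; have n23' := n23.symm; have n30' := n30.symm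
  have n02' := n02.symm; have n13' := n13.symm
  rw [Walk.isCycle_def]
  refine ⟨?_, by simp, ?_⟩
  · simp [Walk.isTrail_def, Sym2.eq_iff]; tauto
  · simp; tauto

lemma fourCycleSet {V : Type*} {G : SimpleGraph V} {v0 v1 v2 v3 : V}
    (h01 : G.Adj v0 v1) (h12 : G.Adj v1 v2) (h23 : G.Adj v2 v3) (h30 : G.Adj v3 v0)
    (n02 : v0 ≠ v2) (n13 : v1 ≠ v3) :
    IsFourCycleEdgeSet G {s(v0,v1), s(v1,v2), s(v2,v3), s(v3,v0)} := by
  refine ⟨v0, Walk.cons h01 (Walk.cons h12 (Walk.cons h23 (Walk.cons h30 Walk.nil))),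
    fourCycle' h01 h12 h23 h30 n02 n13, rfl, ?_⟩
  ext e
  simp only [Walk.edges_cons, Walk.edges_nil, List.mem_cons, List.not_mem_nil, or_false,
    Set.mem_setOf_eq, Set.mem_insert_iff, Set.mem_singleton_iff]

lemma face_cycle (h1₁ : (1:ZMod L₁) ≠ 0) (h1₂ : (1:ZMod L₂) ≠ 0) (h1₃ : (1:ZMod L₃) ≠ 0)
    (k : ℕ) (hk : k < 3) (x : ZMod L₁) (y : ZMod L₂) (z : ZMod L₃) :
    IsFourCycleEdgeSet (Q3 L₁ L₂ L₃) (face L₁ L₂ L₃ k x y z) := by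
  rcases k with _|_|_|k
  · simp only [face]
    exact fourCycleSet (adj1 h1₁ x y z) (adj2 h1₂ (x+1) y z) ((adj1 h1₁ x (y+1) z).symm)
      ((adj2 h1₂ x y z).symm)
      (fun h => h1₁ (left_eq_add.mp (congrArg (fun p => p.1) h)))
      (fun h => h1₂ (left_eq_add.mp (congrArg (fun p => p.2.1) h)))
  · simp only [face]
    exact fourCycleSet (adj2 h1₂ x y z) (adj3 h1₃ x (y+1) z) ((adj2 h1₂ x y (z+1)).symm)
      ((adj3 h1₃ x y z).symm)
      (fun h => h1₂ (left_eq_add.mp (congrArg (fun p => p.2.1) h)))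
      (fun h => h1₂ (left_eq_add.mp (congrArg (fun p => p.2.1) h).symm))
  · simp only [face]
    exact fourCycleSet (adj3 h1₃ x y z) (adj1 h1₁ x y (z+1)) ((adj3 h1₃ (x+1) y z).symm)
      ((adj1 h1₁ x y z).symm)
      (fun h => h1₁ (left_eq_add.mp (congrArg (fun p => p.1) h)))
      (fun h => h1₁ (left_eq_add.mp (congrArg (fun p => p.1) h)))
  · omega

lemma face_subset (h1₁ : (1:ZMod L₁) ≠ 0) (h1₂ : (1:ZMod L₂) ≠ 0) (h1₃ : (1:ZMod L₃) ≠ 0)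
    (k : ℕ) (x : ZMod L₁) (y : ZMod L₂) (z : ZMod L₃) :
    face L₁ L₂ L₃ k x y z ⊆ (Q3 L₁ L₂ L₃).edgeSet := by
  rcases k with _|_|_|k
  · rintro e he
    simp only [face, Set.mem_insert_iff, Set.mem_singleton_iff] at he
    rcases he with rfl|rfl|rfl|rfl
    · exact (adj1 h1₁ x y z)
    · exact (adj2 h1₂ (x+1) y z)
    · exact ((adj1 h1₁ x (y+1) z).symm)
    · exact ((adj2 h1₂ x y z).symm)
  · rintro e he
    simp only [face, Set.mem_insert_iff, Set.mem_singleton_iff] at he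
    rcases he with rfl|rfl|rfl|rfl
    · exact (adj2 h1₂ x y z)
    · exact (adj3 h1₃ x (y+1) z)
    · exact ((adj2 h1₂ x y (z+1)).symm)
    · exact ((adj3 h1₃ x y z).symm)
  · rintro e he
    simp only [face, Set.mem_insert_iff, Set.mem_singleton_iff] at he
    rcases he with rfl|rfl|rfl|rfl
    · exact (adj3 h1₃ x y z)
    · exact (adj1 h1₁ x y (z+1))
    · exact ((adj3 h1₃ (x+1) y z).symm)
    · exact ((adj1 h1₁ x y z).symm)
  · simp [face]

lemma cover (e : Sym2 (QV L₁ L₂ L₃)) (he : e ∈ (Q3 L₁ L₂ L₃).edgeSet) :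
    ∃ x y z, e = s(((x,y,z) : QV L₁ L₂ L₃),(x+1,y,z)) ∨
      e = s(((x,y,z) : QV L₁ L₂ L₃),(x,y+1,z)) ∨ e = s(((x,y,z) : QV L₁ L₂ L₃),(x,y,z+1)) := by
  induction e using Sym2.ind with
  | _ u v =>
    rw [SimpleGraph.mem_edgeSet] at he
    obtain ⟨x, y, z⟩ := u
    obtain ⟨a, b, c⟩ := v
    simp only [Q3, SimpleGraph.boxProd_adj, cycleG, SimpleGraph.fromRel_adj,
      Prod.mk.injEq] at he
    rcases he with ⟨⟨-, hd | hd⟩, rfl, rfl⟩ |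
      ⟨⟨⟨-, hd | hd⟩, rfl⟩ | ⟨⟨-, hd | hd⟩, rfl⟩, rfl⟩
    · exact ⟨a, y, z, Or.inl (by rw [show x = a + 1 from by linear_combination hd]; exact Sym2.eq_swap)⟩
    · exact ⟨x, y, z, Or.inl (by rw [show a = x + 1 from by linear_combination hd])⟩
    · exact ⟨x, b, z, Or.inr (Or.inl (by rw [show y = b + 1 from by linear_combination hd]; exact Sym2.eq_swap))⟩
    · exact ⟨x, y, z, Or.inr (Or.inl (by rw [show b = y + 1 from by linear_combination hd]))⟩
    · exact ⟨x, y, c, Or.inr (Or.inr (by rw [show z = c + 1 from by linear_combination hd]; exact Sym2.eq_swap))⟩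
    · exact ⟨x, y, z, Or.inr (Or.inr (by rw [show c = z + 1 from by linear_combination hd]))⟩


end Q3P

/-- If all `Lᵢ` are even and `Lᵢ ≥ 4`, then `Q³(L₁,L₂,L₃)` admits a
4-cycle decomposition: a partition of its edge set into edge sets of 4-cycles. -/
theorem q3_four_cycle_decomp_exists (L₁ L₂ L₃ : ℕ)
    (he₁ : Even L₁) (he₂ : Even L₂) (he₃ : Even L₃)
    (h₁ : 4 ≤ L₁) (h₂ : 4 ≤ L₂) (h₃ : 4 ≤ L₃) :
    ∃ D : Set (Set (Sym2 (QV L₁ L₂ L₃))), IsFourCycleDecomp (Q3 L₁ L₂ L₃) D := by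
  have hd₁ : 2 ∣ L₁ := he₁.two_dvd
  have hd₂ : 2 ∣ L₂ := he₂.two_dvd
  have hd₃ : 2 ∣ L₃ := he₃.two_dvd
  haveI : NeZero L₁ := ⟨by omega⟩
  haveI : NeZero L₂ := ⟨by omega⟩
  haveI : NeZero L₃ := ⟨by omega⟩
  set f₁ : ZMod L₁ →+* ZMod 2 := ZMod.castHom hd₁ (ZMod 2) with hf₁
  set f₂ : ZMod L₂ →+* ZMod 2 := ZMod.castHom hd₂ (ZMod 2) with hf₂
  set f₃ : ZMod L₃ →+* ZMod 2 := ZMod.castHom hd₃ (ZMod 2) with hf₃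
  have key : ∀ (L : ℕ), 4 ≤ L → ((1 : ZMod L) ≠ 0 ∧ (2 : ZMod L) ≠ 0) := by
    intro L hL
    constructor
    · intro h
      have : (((1:ℕ) : ZMod L)) = 0 := by exact_mod_cast h
      rw [ZMod.natCast_eq_zero_iff] at this
      have := Nat.le_of_dvd (by norm_num) this; omega
    · intro h
      have : (((2:ℕ) : ZMod L)) = 0 := by exact_mod_cast h
      rw [ZMod.natCast_eq_zero_iff] at this
      have := Nat.le_of_dvd (by norm_num) this; omega
  obtain ⟨h1₁, h2₁⟩ := key L₁ h₁
  obtain ⟨h1₂, h2₂⟩ := key L₂ h₂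
  obtain ⟨h1₃, h2₃⟩ := key L₃ h₃
  refine ⟨{s | ∃ k x' y' z', Q3P.cond f₁ f₂ f₃ k x' y' z' ∧ s = Q3P.face L₁ L₂ L₃ k x' y' z'},
    ?_, ?_, ?_⟩
  · rintro s ⟨k, x', y', z', hc, rfl⟩
    have hk : k < 3 := by
      rcases k with _|_|_|n
      · omega
      · omega
      · omega
      · exact absurd hc (by simp [Q3P.cond])
    exact Q3P.face_cycle h1₁ h1₂ h1₃ k hk x' y' z'
  · rintro s ⟨k, x', y', z', hc, rfl⟩ t ⟨k2, a, b, c, hc2, rfl⟩ hne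
    rw [Set.disjoint_left]
    intro e he1 he2
    have hed : e ∈ (Q3 L₁ L₂ L₃).edgeSet := Q3P.face_subset h1₁ h1₂ h1₃ k x' y' z' he1
    obtain ⟨x, y, z, hf | hf | hf⟩ := Q3P.cover e hed
    · subst hf
      have hA := Q3P.helper1 f₁ f₂ f₃ h1₁ h2₁ h1₂ hc x y z he1
      have hB := Q3P.helper1 f₁ f₂ f₃ h1₁ h2₁ h1₂ hc2 x y z he2
      have := hA.trans hB.symm
      simp only [Prod.mk.injEq] at this
      obtain ⟨rfl, rfl, rfl, rfl⟩ := this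
      exact hne rfl
    · subst hf
      have hA := Q3P.helper2 f₁ f₂ f₃ h1₁ h1₂ h2₂ hc x y z he1
      have hB := Q3P.helper2 f₁ f₂ f₃ h1₁ h1₂ h2₂ hc2 x y z he2
      have := hA.trans hB.symm
      simp only [Prod.mk.injEq] at this
      obtain ⟨rfl, rfl, rfl, rfl⟩ := this
      exact hne rfl
    · subst hf
      have hA := Q3P.helper3 f₁ f₂ f₃ h1₁ h1₂ h1₃ h2₃ hc x y z he1
      have hB := Q3P.helper3 f₁ f₂ f₃ h1₁ h1₂ h1₃ h2₃ hc2 x y z he2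
      have := hA.trans hB.symm
      simp only [Prod.mk.injEq] at this
      obtain ⟨rfl, rfl, rfl, rfl⟩ := this
      exact hne rfl
  · apply subset_antisymm
    · rintro e ⟨s, ⟨k, x', y', z', hc, rfl⟩, he⟩
      exact Q3P.face_subset h1₁ h1₂ h1₃ k x' y' z' he
    · intro e he
      obtain ⟨x, y, z, hf | hf | hf⟩ := Q3P.cover e he
      · obtain ⟨k, x', y', z', hc, hm⟩ := Q3P.exist1 f₁ f₂ f₃ x y z
        exact ⟨_, ⟨k, x', y', z', hc, rfl⟩, hf ▸ hm⟩
      · obtain ⟨k, x', y', z', hc, hm⟩ := Q3P.exist2 f₁ f₂ f₃ x y z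
        exact ⟨_, ⟨k, x', y', z', hc, rfl⟩, hf ▸ hm⟩
      · obtain ⟨k, x', y', z', hc, hm⟩ := Q3P.exist3 f₁ f₂ f₃ x y z
        exact ⟨_, ⟨k, x', y', z', hc, rfl⟩, hf ▸ hm⟩
end

section
/- Consider the L×L' torus grid (Cartesian product of two even cycles C_L □ C_{L'}, L, L' even, ≥ 4) and families of unit-square faces such that every vertex belongs to exactly one face and no two faces share a vertex. The number of such families is exactly 2(2^{L/2} + 2^{L'/2} - 2), in particular at most 4(2^{L/2} + 2^{L'/2}). -/
/-- The unit-square face of the `L × L'` torus grid with lower-left corner `(i, j)`. -/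
def faceVerts {L L' : ℕ} (i : ZMod L) (j : ZMod L') : Set (ZMod L × ZMod L') :=
  {(i, j), (i + 1, j), (i, j + 1), (i + 1, j + 1)}

/-- A perfect face packing of the `L × L'` torus grid `C_L □ C_{L'}`: a family of
unit-square faces such that every vertex belongs to exactly one face of the family
(in particular no two faces share a vertex). -/
def IsPerfectFacePacking (L L' : ℕ) (F : Set (Set (ZMod L × ZMod L'))) : Prop :=
  (∀ s ∈ F, ∃ (i : ZMod L) (j : ZMod L'), s = faceVerts i j) ∧
  ∀ v : ZMod L × ZMod L', ∃! s, s ∈ F ∧ v ∈ s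

namespace TorusPack

variable {n : ℕ}

def bit (n : ℕ) (b : Bool) : ZMod n := (b.toNat : ZMod n)

def dbl (n : ℕ) (k : ZMod (n/2)) : ZMod n := (2 * k.val : ℕ)

lemma val_lt_half (hn : 4 ≤ n) (k : ZMod (n/2)) : k.val < n/2 := by
  haveI : NeZero (n/2) := ⟨by omega⟩
  exact ZMod.val_lt k

lemma val_dbl_add_bit (hn : 4 ≤ n) (hne : Even n) (k : ZMod (n/2)) (t : Bool) :
    (dbl n k + bit n t).val = 2 * k.val + t.toNat := by
  haveI : NeZero n := ⟨by omega⟩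
  have hk := val_lt_half hn k
  have h2 : 2 * k.val + t.toNat < n := by
    obtain ⟨m, hm⟩ := hne; rcases t <;> simp <;> omega
  have : dbl n k + bit n t = ((2 * k.val + t.toNat : ℕ) : ZMod n) := by
    rw [bit, dbl]; push_cast; ring
  rw [this, ZMod.val_cast_of_lt h2]

lemma decomp_inj (hn : 4 ≤ n) (hne : Even n) {k k' : ZMod (n/2)} {t t' : Bool}
    (h : dbl n k + bit n t = dbl n k' + bit n t') : k = k' ∧ t = t' := by
  haveI : NeZero (n/2) := ⟨by omega⟩
  have h1 := val_dbl_add_bit hn hne k t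
  have h2 := val_dbl_add_bit hn hne k' t'
  rw [h, h2] at h1
  have hb : t.toNat < 2 := Bool.toNat_lt t
  have hb' : t'.toNat < 2 := Bool.toNat_lt t'
  have hk : k.val = k'.val ∧ t.toNat = t'.toNat := by omega
  exact ⟨ZMod.val_injective _ hk.1, by
    rcases t <;> rcases t' <;> simp_all⟩

lemma exists_decomp (hn : 4 ≤ n) (hne : Even n) (x : ZMod n) :
    x = dbl n ((x.val / 2 : ℕ) : ZMod (n/2)) + bit n (decide (x.val % 2 = 1)) := by
  haveI : NeZero n := ⟨by omega⟩
  haveI : NeZero (n/2) := ⟨by omega⟩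
  have hx : x.val < n := ZMod.val_lt x
  have hlt : x.val / 2 < n / 2 := by obtain ⟨m, hm⟩ := hne; omega
  have hv : (((x.val / 2 : ℕ) : ZMod (n/2))).val = x.val / 2 := ZMod.val_cast_of_lt hlt
  have h3 : dbl n ((x.val / 2 : ℕ) : ZMod (n/2)) + bit n (decide (x.val % 2 = 1))
      = ((2 * (x.val / 2) + (decide (x.val % 2 = 1)).toNat : ℕ) : ZMod n) := by
    rw [bit, dbl, hv]; push_cast; ring
  have h4 : 2 * (x.val / 2) + (decide (x.val % 2 = 1)).toNat = x.val := by
    rcases Nat.mod_two_eq_zero_or_one x.val with h | h <;> simp [h] <;> omega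
  rw [h3, h4]
  exact (ZMod.natCast_rightInverse x).symm


lemma mem_face_iff {L L' : ℕ} {i : ZMod L} {j : ZMod L'} {v : ZMod L × ZMod L'} :
    v ∈ faceVerts i j ↔ (v.1 = i ∨ v.1 = i + 1) ∧ (v.2 = j ∨ v.2 = j + 1) := by
  obtain ⟨x, y⟩ := v
  simp [faceVerts, Prod.ext_iff]
  tauto

lemma one_ne_zero' {n : ℕ} (hn : 4 ≤ n) : (1 : ZMod n) ≠ 0 := by
  haveI : NeZero n := ⟨by omega⟩
  intro h
  have h1 := ZMod.val_cast_of_lt (show 1 < n by omega)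
  rw [Nat.cast_one, h] at h1
  simp at h1

lemma two_ne_zero' {n : ℕ} (hn : 4 ≤ n) : (2 : ZMod n) ≠ 0 := by
  haveI : NeZero n := ⟨by omega⟩
  intro h
  have h1 := ZMod.val_cast_of_lt (show 2 < n by omega)
  rw [Nat.cast_ofNat, h] at h1
  simp at h1

lemma succ_ne_self {n : ℕ} (hn : 4 ≤ n) (x : ZMod n) : x + 1 ≠ x := by
  intro h
  exact one_ne_zero' hn (by linear_combination h)

lemma resolve_pair {n : ℕ} (hn : 4 ≤ n) {x y : ZMod n}
    (h1 : x = y ∨ x = y + 1) (h2 : y = x ∨ y = x + 1) : x = y := by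
  rcases h1 with h | h
  · exact h
  rcases h2 with h' | h'
  · exfalso; exact one_ne_zero' hn (by linear_combination -h - h')
  · exfalso; exact two_ne_zero' hn (by linear_combination -h - h')
lemma faceVerts_inj {L L' : ℕ} (hL : 4 ≤ L) (hL' : 4 ≤ L') {i i' : ZMod L} {j j' : ZMod L'}
    (h : faceVerts i j = faceVerts i' j') : i = i' ∧ j = j' := by
  have h1 : (i, j) ∈ faceVerts i' j' := by rw [← h]; simp [faceVerts]
  have h2 : (i', j') ∈ faceVerts i j := by rw [h]; simp [faceVerts]
  rw [mem_face_iff] at h1 h2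
  dsimp only at h1 h2
  exact ⟨resolve_pair hL h1.1 h2.1, resolve_pair hL' h1.2 h2.2⟩


lemma decomp_of_parity {n : ℕ} (hn : 4 ≤ n) (hne : Even n) {x : ZMod n} {t : Bool}
    (h : x.val % 2 = t.toNat) : x = dbl n ((x.val / 2 : ℕ) : ZMod (n/2)) + bit n t := by
  haveI : NeZero n := ⟨by omega⟩
  haveI : NeZero (n/2) := ⟨by omega⟩
  have hx : x.val < n := ZMod.val_lt x
  have hlt : x.val / 2 < n / 2 := by obtain ⟨m, hm⟩ := hne; omega
  have hv : (((x.val / 2 : ℕ) : ZMod (n/2))).val = x.val / 2 := ZMod.val_cast_of_lt hlt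
  have h3 : dbl n ((x.val / 2 : ℕ) : ZMod (n/2)) + bit n t
      = ((2 * (x.val / 2) + t.toNat : ℕ) : ZMod n) := by
    rw [bit, dbl, hv]; push_cast; ring
  have hbt := Bool.toNat_lt t
  have h4 : 2 * (x.val / 2) + t.toNat = x.val := by omega
  rw [h3, h4]
  exact (ZMod.natCast_rightInverse x).symm

@[simp] lemma bit_false {n : ℕ} : bit n false = 0 := by simp [bit]
@[simp] lemma bit_true {n : ℕ} : bit n true = 1 := by simp [bit]

lemma or_to_bit {n : ℕ} {x i : ZMod n} (h : x = i ∨ x = i + 1) : ∃ b : Bool, x = i + bit n b := by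
  rcases h with h | h
  · exact ⟨false, by simp [h]⟩
  · exact ⟨true, by simp [h]⟩

lemma bit_to_or {n : ℕ} {x i : ZMod n} {b : Bool} (h : x = i + bit n b) : x = i ∨ x = i + 1 := by
  rcases b with _ | _
  · left; simpa using h
  · right; simpa using h

variable {L L' : ℕ}

def phiH (L L' : ℕ) (c : Bool) (o : ZMod (L'/2) → Bool) : Set (Set (ZMod L × ZMod L')) :=
  {s | ∃ (k : ZMod (L'/2)) (m : ZMod (L/2)),
    s = faceVerts (dbl L m + bit L (o k)) (dbl L' k + bit L' c)}

def phiV (L L' : ℕ) (c : Bool) (o : ZMod (L/2) → Bool) : Set (Set (ZMod L × ZMod L')) :=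
  {s | ∃ (m : ZMod (L/2)) (k : ZMod (L'/2)),
    s = faceVerts (dbl L m + bit L c) (dbl L' k + bit L' (o m))}

lemma phiH_packing (hL : 4 ≤ L) (hL' : 4 ≤ L') (heL : Even L) (heL' : Even L')
    (c : Bool) (o : ZMod (L'/2) → Bool) : IsPerfectFacePacking L L' (phiH L L' c o) := by
  constructor
  · rintro s ⟨k, m, rfl⟩; exact ⟨_, _, rfl⟩
  · rintro ⟨x, y⟩
    have hdy := exists_decomp hL' heL' (y - bit L' c)
    set k := (((y - bit L' c).val / 2 : ℕ) : ZMod (L'/2)) with hk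
    set t := decide ((y - bit L' c).val % 2 = 1) with ht
    have hdx := exists_decomp hL heL (x - bit L (o k))
    set m := (((x - bit L (o k)).val / 2 : ℕ) : ZMod (L/2)) with hm
    set sb := decide ((x - bit L (o k)).val % 2 = 1) with hsb
    refine ⟨faceVerts (dbl L m + bit L (o k)) (dbl L' k + bit L' c), ⟨⟨k, m, rfl⟩, ?_⟩, ?_⟩
    · rw [mem_face_iff]
      constructor
      · exact bit_to_or (b := sb) (by linear_combination hdx)
      · exact bit_to_or (b := t) (by linear_combination hdy)
    · rintro s ⟨⟨k', m', rfl⟩, hmem⟩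
      rw [mem_face_iff] at hmem
      obtain ⟨hx2, hy2⟩ := hmem
      dsimp only at hx2 hy2
      obtain ⟨t', hy3⟩ := or_to_bit hy2
      have hkk : k' = k ∧ t' = t := by
        apply decomp_inj hL' heL'
        linear_combination -hy3 + hdy
      obtain ⟨hkk1, -⟩ := hkk
      subst hkk1
      obtain ⟨s', hx3⟩ := or_to_bit hx2
      have hmm : m' = m ∧ s' = sb := by
        apply decomp_inj hL heL
        linear_combination -hx3 + hdx
      rw [hmm.1]

lemma phiV_packing (hL : 4 ≤ L) (hL' : 4 ≤ L') (heL : Even L) (heL' : Even L')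
    (c : Bool) (o : ZMod (L/2) → Bool) : IsPerfectFacePacking L L' (phiV L L' c o) := by
  constructor
  · rintro s ⟨m, k, rfl⟩; exact ⟨_, _, rfl⟩
  · rintro ⟨x, y⟩
    have hdx := exists_decomp hL heL (x - bit L c)
    set m := (((x - bit L c).val / 2 : ℕ) : ZMod (L/2)) with hm
    set sb := decide ((x - bit L c).val % 2 = 1) with hsb
    have hdy := exists_decomp hL' heL' (y - bit L' (o m))
    set k := (((y - bit L' (o m)).val / 2 : ℕ) : ZMod (L'/2)) with hk
    set t := decide ((y - bit L' (o m)).val % 2 = 1) with ht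
    refine ⟨faceVerts (dbl L m + bit L c) (dbl L' k + bit L' (o m)), ⟨⟨m, k, rfl⟩, ?_⟩, ?_⟩
    · rw [mem_face_iff]
      constructor
      · exact bit_to_or (b := sb) (by linear_combination hdx)
      · exact bit_to_or (b := t) (by linear_combination hdy)
    · rintro s ⟨⟨m', k', rfl⟩, hmem⟩
      rw [mem_face_iff] at hmem
      obtain ⟨hx2, hy2⟩ := hmem
      dsimp only at hx2 hy2
      obtain ⟨s', hx3⟩ := or_to_bit hx2
      have hmm : m' = m ∧ s' = sb := by
        apply decomp_inj hL heL
        linear_combination -hx3 + hdx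
      obtain ⟨hmm1, -⟩ := hmm
      subst hmm1
      obtain ⟨t', hy3⟩ := or_to_bit hy2
      have hkk : k' = k ∧ t' = t := by
        apply decomp_inj hL' heL'
        linear_combination -hy3 + hdy
      rw [hkk.1]


lemma parity_iff_helper {P : Prop} {jv : ℕ} {cb : Bool} (hcs : P ↔ cb = false) :
    ((P ↔ jv % 2 = 0) ↔ jv % 2 = cb.toNat) := by
  rcases cb with _ | _ <;> simp at hcs <;> simp [hcs] <;> omega

section Classify
variable {L L' : ℕ} {F : Set (Set (ZMod L × ZMod L'))}
  (hL : 4 ≤ L) (hL' : 4 ≤ L')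
  (b : ZMod L × ZMod L' → ZMod L × ZMod L')
  (hb1 : ∀ v, faceVerts (b v).1 (b v).2 ∈ F)
  (hb2 : ∀ v, v ∈ faceVerts (b v).1 (b v).2)
  (hb3 : ∀ v (i : ZMod L) (j : ZMod L'), faceVerts i j ∈ F → v ∈ faceVerts i j → (i, j) = b v)

def Rp (b : ZMod L × ZMod L' → ZMod L × ZMod L') (v : ZMod L × ZMod L') : Prop := (b v).1 = v.1
def Tp (b : ZMod L × ZMod L' → ZMod L × ZMod L') (v : ZMod L × ZMod L') : Prop := (b v).2 = v.2

include hb2 in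
lemma dich1 (v : ZMod L × ZMod L') : v.1 = (b v).1 ∨ v.1 = (b v).1 + 1 :=
  (mem_face_iff.mp (hb2 v)).1

include hb2 in
lemma dich2 (v : ZMod L × ZMod L') : v.2 = (b v).2 ∨ v.2 = (b v).2 + 1 :=
  (mem_face_iff.mp (hb2 v)).2

include hb2 hL in
lemma not_R_iff (v : ZMod L × ZMod L') : ¬ Rp b v ↔ (b v).1 = v.1 - 1 := by
  constructor
  · intro h
    rcases dich1 b hb2 v with h' | h'
    · exact absurd h'.symm h
    · linear_combination -h'
  · intro h h'
    rw [h'] at h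
    exact one_ne_zero' hL (by linear_combination h)

include hb2 hL' in
lemma not_T_iff (v : ZMod L × ZMod L') : ¬ Tp b v ↔ (b v).2 = v.2 - 1 := by
  constructor
  · intro h
    rcases dich2 b hb2 v with h' | h'
    · exact absurd h'.symm h
    · linear_combination -h'
  · intro h h'
    rw [h'] at h
    exact one_ne_zero' hL' (by linear_combination h)

include hb1 hb3 in
lemma base_eq (v w : ZMod L × ZMod L') (h : w ∈ faceVerts (b v).1 (b v).2) : b w = b v := by
  have := hb3 w (b v).1 (b v).2 (hb1 v) h
  rw [← this]

include hb1 hb3 in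
lemma base_eq' (v w : ZMod L × ZMod L') (h1 : w.1 = (b v).1 ∨ w.1 = (b v).1 + 1)
    (h2 : w.2 = (b v).2 ∨ w.2 = (b v).2 + 1) : b w = b v :=
  base_eq b hb1 hb3 v w (mem_face_iff.mpr ⟨h1, h2⟩)

include hb1 hb2 hb3 in
lemma R_step (x : ZMod L) (y : ZMod L') (h : Rp b (x, y)) : b (x + 1, y) = b (x, y) := by
  apply base_eq' b hb1 hb3
  · right; dsimp; rw [h]
  · exact dich2 b hb2 (x, y)

include hb1 hb2 hb3 in
lemma T_step (x : ZMod L) (y : ZMod L') (h : Tp b (x, y)) : b (x, y + 1) = b (x, y) := by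
  apply base_eq' b hb1 hb3
  · exact dich1 b hb2 (x, y)
  · right; dsimp; rw [h]

include hL hb1 hb2 hb3 in
lemma R_then_not (x : ZMod L) (y : ZMod L') (h : Rp b (x, y)) : ¬ Rp b (x + 1, y) := by
  intro h'
  unfold Rp at h h'
  rw [R_step b hb1 hb2 hb3 x y h] at h'
  dsimp at h h'
  exact one_ne_zero' hL (by linear_combination h - h')

include hL' hb1 hb2 hb3 in
lemma T_then_not (x : ZMod L) (y : ZMod L') (h : Tp b (x, y)) : ¬ Tp b (x, y + 1) := by
  intro h'
  unfold Tp at h h'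
  rw [T_step b hb1 hb2 hb3 x y h] at h'
  dsimp at h h'
  exact one_ne_zero' hL' (by linear_combination h - h')

include hL hb1 hb2 hb3 in
lemma not_R_then (x : ZMod L) (y : ZMod L') (h : ¬ Rp b (x, y)) : Rp b (x + 1, y) := by
  by_contra h'
  have hb' : (b (x + 1, y)).1 = (x + 1) - 1 := (not_R_iff hL b hb2 _).mp h'
  have hmem : b (x, y) = b (x + 1, y) := by
    apply base_eq' b hb1 hb3
    · left; dsimp; rw [hb']; ring
    · exact dich2 b hb2 (x + 1, y)
  apply h
  unfold Rp
  rw [hmem, hb']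
  dsimp
  ring

include hL' hb1 hb2 hb3 in
lemma not_T_then (x : ZMod L) (y : ZMod L') (h : ¬ Tp b (x, y)) : Tp b (x, y + 1) := by
  by_contra h'
  have hb' : (b (x, y + 1)).2 = (y + 1) - 1 := (not_T_iff hL' b hb2 _).mp h'
  have hmem : b (x, y) = b (x, y + 1) := by
    apply base_eq' b hb1 hb3
    · exact dich1 b hb2 (x, y + 1)
    · left; dsimp; rw [hb']; ring
  apply h
  unfold Tp
  rw [hmem, hb']
  dsimp
  ring

include hL hb1 hb2 hb3 in
lemma R_alt (x : ZMod L) (y : ZMod L') : Rp b (x + 1, y) ↔ ¬ Rp b (x, y) := by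
  constructor
  · intro h' h
    exact R_then_not hL b hb1 hb2 hb3 x y h h'
  · exact not_R_then hL b hb1 hb2 hb3 x y

include hL' hb1 hb2 hb3 in
lemma T_alt (x : ZMod L) (y : ZMod L') : Tp b (x, y + 1) ↔ ¬ Tp b (x, y) := by
  constructor
  · intro h' h
    exact T_then_not hL' b hb1 hb2 hb3 x y h h'
  · exact not_T_then hL' b hb1 hb2 hb3 x y

include hb1 hb2 hb3 in
lemma R_T (x : ZMod L) (y : ZMod L') (h : Rp b (x, y)) : Tp b (x + 1, y) ↔ Tp b (x, y) := by
  unfold Tp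
  rw [R_step b hb1 hb2 hb3 x y h]

include hb1 hb2 hb3 in
lemma entry (x : ZMod L) (y : ZMod L') (hm : ¬ (Tp b (x, y) ↔ Tp b (x + 1, y))) :
    ¬ Rp b (x, y) := fun h => hm (R_T b hb1 hb2 hb3 x y h).symm

include hL hL' hb1 hb2 hb3 in
lemma propagate (x : ZMod L) (y : ZMod L') (hm : ¬ (Tp b (x, y) ↔ Tp b (x + 1, y))) :
    ¬ (Tp b (x, y + 1) ↔ Tp b (x + 1, y + 1)) := by
  have hR : ¬ Rp b (x, y) := entry b hb1 hb2 hb3 x y hm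
  have hR1 : Rp b (x + 1, y) := not_R_then hL b hb1 hb2 hb3 x y hR
  have hbv1 : (b (x, y)).1 = x - 1 := (not_R_iff hL b hb2 (x, y)).mp hR
  by_cases hT : Tp b (x, y)
  case pos =>
    have hT1 : ¬ Tp b (x + 1, y) := fun h => hm ⟨fun _ => h, fun _ => hT⟩
    have hbv : b (x, y) = (x - 1, y) := Prod.ext hbv1 hT
    have hbv2 : b (x + 1, y) = (x + 1, y - 1) :=
      Prod.ext hR1 ((not_T_iff hL' b hb2 _).mp hT1)
    have hstep : b (x, y + 1) = (x - 1, y) := by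
      rw [← hbv]
      apply base_eq' b hb1 hb3
      · right; dsimp; rw [hbv]; dsimp; ring
      · right; dsimp; rw [hbv]
    have hTx : ¬ Tp b (x, y + 1) := by
      unfold Tp; rw [hstep]; dsimp; intro h
      exact one_ne_zero' hL' (by linear_combination -h)
    have hTy : Tp b (x + 1, y + 1) := by
      have h1 := dich1 b hb2 (x + 1, y + 1)
      have h2 := dich2 b hb2 (x + 1, y + 1)
      dsimp at h1 h2
      rcases h2 with h2 | h2
      · exact h2.symm
      exfalso
      rcases h1 with h1 | h1
      · have he : b (x + 1, y) = b (x + 1, y + 1) := by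
          apply base_eq' b hb1 hb3
          · left; dsimp; exact h1
          · left; dsimp; linear_combination h2
        rw [hbv2] at he
        have h3 := congrArg Prod.snd he
        dsimp at h3
        exact one_ne_zero' hL' (by linear_combination h2 - h3)
      · have he : b (x, y) = b (x + 1, y + 1) := by
          apply base_eq' b hb1 hb3
          · left; dsimp; linear_combination h1
          · left; dsimp; linear_combination h2
        rw [hbv] at he
        have h3 := congrArg Prod.fst he
        dsimp at h3
        exact one_ne_zero' hL (by linear_combination h1 - h3)
    exact fun hIff => hTx (hIff.mpr hTy)
  case neg =>
    have hT1 : Tp b (x + 1, y) := by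
      by_contra h
      exact hm ⟨fun h' => absurd h' hT, fun h' => absurd h' h⟩
    have hbv : b (x, y) = (x - 1, y - 1) :=
      Prod.ext hbv1 ((not_T_iff hL' b hb2 _).mp hT)
    have hbv2 : b (x + 1, y) = (x + 1, y) := Prod.ext hR1 hT1
    have hstep2 : b (x + 1, y + 1) = (x + 1, y) := by
      rw [← hbv2]
      exact T_step b hb1 hb2 hb3 (x + 1) y hT1
    have hTy : ¬ Tp b (x + 1, y + 1) := by
      unfold Tp; rw [hstep2]; dsimp; intro h
      exact one_ne_zero' hL' (by linear_combination -h)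
    have hTx : Tp b (x, y + 1) := by
      have h1 := dich1 b hb2 (x, y + 1)
      have h2 := dich2 b hb2 (x, y + 1)
      dsimp at h1 h2
      rcases h2 with h2 | h2
      · exact h2.symm
      exfalso
      have he : b (x, y) = b (x, y + 1) := by
        apply base_eq' b hb1 hb3
        · exact h1
        · left; dsimp; linear_combination h2
      rw [hbv] at he
      have h3 := congrArg Prod.snd he
      dsimp at h3
      exact one_ne_zero' hL' (by linear_combination h2 - h3)
    exact fun hIff => hTy (hIff.mp hTx)

include hL hL' hb1 hb2 hb3 in
lemma propagate_n (x : ZMod L) (y : ZMod L') (hm : ¬ (Tp b (x, y) ↔ Tp b (x + 1, y))) :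
    ∀ n : ℕ, ¬ (Tp b (x, y + (n : ZMod L')) ↔ Tp b (x + 1, y + (n : ZMod L'))) := by
  intro n
  induction n with
  | zero => simpa using hm
  | succ n ih =>
    have hc : y + ((n + 1 : ℕ) : ZMod L') = (y + (n : ZMod L')) + 1 := by push_cast; ring
    rw [hc]
    exact propagate hL hL' b hb1 hb2 hb3 x (y + (n : ZMod L')) ih

include hL hL' hb1 hb2 hb3 in
lemma noR_column (x : ZMod L) (y : ZMod L') (hm : ¬ (Tp b (x, y) ↔ Tp b (x + 1, y))) :
    ∀ y' : ZMod L', ¬ Rp b (x, y') := by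
  haveI : NeZero L' := ⟨by omega⟩
  intro y'
  have h := propagate_n hL hL' b hb1 hb2 hb3 x y hm (y' - y).val
  have hc : y + (((y' - y).val : ℕ) : ZMod L') = y' := by
    rw [ZMod.natCast_rightInverse (y' - y)]; ring
  rw [hc] at h
  exact entry b hb1 hb2 hb3 x y' h

include hL hb1 hb2 hb3 in
lemma R_nat (n : ℕ) (x : ZMod L) (y : ZMod L') :
    Rp b (x + (n : ZMod L), y) ↔ (Rp b (x, y) ↔ Even n) := by
  induction n with
  | zero => simp
  | succ n ih =>
    have hc : x + ((n + 1 : ℕ) : ZMod L) = (x + (n : ZMod L)) + 1 := by push_cast; ring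
    rw [hc, R_alt hL b hb1 hb2 hb3, ih, Nat.even_add_one]
    tauto

include hL' hb1 hb2 hb3 in
lemma T_nat (n : ℕ) (x : ZMod L) (y : ZMod L') :
    Tp b (x, y + (n : ZMod L')) ↔ (Tp b (x, y) ↔ Even n) := by
  induction n with
  | zero => simp
  | succ n ih =>
    have hc : y + ((n + 1 : ℕ) : ZMod L') = (y + (n : ZMod L')) + 1 := by push_cast; ring
    rw [hc, T_alt hL' b hb1 hb2 hb3, ih, Nat.even_add_one]
    tauto

include hL hL' hb1 hb2 hb3 in
lemma R_col_const (x : ZMod L) (y : ZMod L') (hm : ¬ (Tp b (x, y) ↔ Tp b (x + 1, y))) :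
    ∀ (x' : ZMod L) (y' y'' : ZMod L'), Rp b (x', y') ↔ Rp b (x', y'') := by
  haveI : NeZero L := ⟨by omega⟩
  have hno := noR_column hL hL' b hb1 hb2 hb3 x y hm
  intro x' y' y''
  have hx : x' = x + (((x' - x).val : ℕ) : ZMod L) := by
    rw [ZMod.natCast_rightInverse (x' - x)]; ring
  rw [hx, R_nat hL b hb1 hb2 hb3, R_nat hL b hb1 hb2 hb3]
  have h1 := hno y'
  have h2 := hno y''
  tauto

include hL in
omit hb1 hb2 hb3 in
lemma T_row_const (hno : ∀ (x : ZMod L) (y : ZMod L'), Tp b (x, y) ↔ Tp b (x + 1, y)) :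
    ∀ (x x' : ZMod L) (y : ZMod L'), Tp b (x, y) ↔ Tp b (x', y) := by
  haveI : NeZero L := ⟨by omega⟩
  have key : ∀ (n : ℕ) (x : ZMod L) (y : ZMod L'), Tp b (x + (n : ZMod L), y) ↔ Tp b (x, y) := by
    intro n
    induction n with
    | zero => simp
    | succ n ih =>
      intro x y
      have hc : x + ((n + 1 : ℕ) : ZMod L) = (x + (n : ZMod L)) + 1 := by push_cast; ring
      rw [hc, ← hno (x + (n : ZMod L)) y, ih]
  intro x x' y
  have hx : x' = x + (((x' - x).val : ℕ) : ZMod L) := by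
    rw [ZMod.natCast_rightInverse (x' - x)]; ring
  rw [hx, key]

include hL hL' hb1 hb2 hb3 in
lemma assembleH (heL : Even L) (heL' : Even L')
    (hC : ∀ (x x' : ZMod L) (y : ZMod L'), Tp b (x, y) ↔ Tp b (x', y))
    (hFs : ∀ s ∈ F, ∃ (i : ZMod L) (j : ZMod L'), s = faceVerts i j) :
    ∃ c o, F = phiH L L' c o := by
  classical
  haveI : NeZero L := ⟨by omega⟩
  haveI : NeZero L' := ⟨by omega⟩
  set c : Bool := if Tp b (0, 0) then false else true with hc
  set o : ZMod (L'/2) → Bool := fun k => if Rp b (0, dbl L' k + bit L' c) then false else true with ho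
  refine ⟨c, o, ?_⟩
  have keyT : ∀ (i : ZMod L) (j : ZMod L'), (Tp b (i, j) ↔ j.val % 2 = c.toNat) := by
    intro i j
    have h1 : Tp b (i, j) ↔ Tp b (0, j) := hC i 0 j
    have hj : (0 : ZMod L') + ((j.val : ℕ) : ZMod L') = j := by
      rw [ZMod.natCast_rightInverse j]; ring
    have h2 : Tp b (0, j) ↔ (Tp b (0, 0) ↔ Even j.val) := by
      conv_lhs => rw [← hj]
      exact T_nat hL' b hb1 hb2 hb3 j.val 0 0
    rw [h1, h2, Nat.even_iff]
    exact parity_iff_helper (by rw [hc]; by_cases h0 : Tp b (0, 0) <;> simp [h0])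
  have keyR : ∀ (i : ZMod L) (k : ZMod (L'/2)),
      (Rp b (i, dbl L' k + bit L' c) ↔ i.val % 2 = (o k).toNat) := by
    intro i k
    have hi : (0 : ZMod L) + ((i.val : ℕ) : ZMod L) = i := by
      rw [ZMod.natCast_rightInverse i]; ring
    have h2 : Rp b (i, dbl L' k + bit L' c) ↔ (Rp b (0, dbl L' k + bit L' c) ↔ Even i.val) := by
      conv_lhs => rw [← hi]
      exact R_nat hL b hb1 hb2 hb3 i.val 0 _
    rw [h2, Nat.even_iff]
    exact parity_iff_helper (by rw [ho]; by_cases h0 : Rp b (0, dbl L' k + bit L' c) <;> simp [h0])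
  ext s
  constructor
  · intro hs
    obtain ⟨i, j, rfl⟩ := hFs s hs
    have hfix : (i, j) = b (i, j) :=
      hb3 (i, j) i j hs (mem_face_iff.mpr ⟨Or.inl rfl, Or.inl rfl⟩)
    have hRij : Rp b (i, j) := by unfold Rp; rw [← hfix]
    have hTij : Tp b (i, j) := by unfold Tp; rw [← hfix]
    have hj : j.val % 2 = c.toNat := (keyT i j).mp hTij
    have hjd : j = dbl L' ((j.val / 2 : ℕ) : ZMod (L'/2)) + bit L' c :=
      decomp_of_parity hL' heL' hj
    have hRij' : Rp b (i, dbl L' ((j.val / 2 : ℕ) : ZMod (L'/2)) + bit L' c) := by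
      rw [← hjd]; exact hRij
    have hi2 : i.val % 2 = (o ((j.val / 2 : ℕ) : ZMod (L'/2))).toNat := (keyR i _).mp hRij'
    have hid : i = dbl L ((i.val / 2 : ℕ) : ZMod (L/2)) + bit L (o ((j.val / 2 : ℕ) : ZMod (L'/2))) :=
      decomp_of_parity hL heL hi2
    exact ⟨((j.val / 2 : ℕ) : ZMod (L'/2)), ((i.val / 2 : ℕ) : ZMod (L/2)), by rw [← hid, ← hjd]⟩
  · rintro ⟨k, m, rfl⟩
    have hbt := Bool.toNat_lt c
    have hbo := Bool.toNat_lt (o k)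
    have hj : (dbl L' k + bit L' c).val % 2 = c.toNat := by
      rw [val_dbl_add_bit hL' heL']; omega
    have hi : (dbl L m + bit L (o k)).val % 2 = (o k).toNat := by
      rw [val_dbl_add_bit hL heL]; omega
    have hT : Tp b (dbl L m + bit L (o k), dbl L' k + bit L' c) := (keyT _ _).mpr hj
    have hR : Rp b (dbl L m + bit L (o k), dbl L' k + bit L' c) := (keyR _ k).mpr hi
    have hfix : b (dbl L m + bit L (o k), dbl L' k + bit L' c)
        = (dbl L m + bit L (o k), dbl L' k + bit L' c) := Prod.ext hR hT
    have h5 := hb1 (dbl L m + bit L (o k), dbl L' k + bit L' c)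
    rw [hfix] at h5
    exact h5

include hL hL' hb1 hb2 hb3 in
lemma assembleV (heL : Even L) (heL' : Even L')
    (hC : ∀ (x : ZMod L) (y y' : ZMod L'), Rp b (x, y) ↔ Rp b (x, y'))
    (hFs : ∀ s ∈ F, ∃ (i : ZMod L) (j : ZMod L'), s = faceVerts i j) :
    ∃ c o, F = phiV L L' c o := by
  classical
  haveI : NeZero L := ⟨by omega⟩
  haveI : NeZero L' := ⟨by omega⟩
  set c : Bool := if Rp b (0, 0) then false else true with hc
  set o : ZMod (L/2) → Bool := fun m => if Tp b (dbl L m + bit L c, 0) then false else true with ho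
  refine ⟨c, o, ?_⟩
  have keyR : ∀ (i : ZMod L) (j : ZMod L'), (Rp b (i, j) ↔ i.val % 2 = c.toNat) := by
    intro i j
    have h1 : Rp b (i, j) ↔ Rp b (i, 0) := hC i j 0
    have hi : (0 : ZMod L) + ((i.val : ℕ) : ZMod L) = i := by
      rw [ZMod.natCast_rightInverse i]; ring
    have h2 : Rp b (i, 0) ↔ (Rp b (0, 0) ↔ Even i.val) := by
      conv_lhs => rw [← hi]
      exact R_nat hL b hb1 hb2 hb3 i.val 0 0
    rw [h1, h2, Nat.even_iff]
    exact parity_iff_helper (by rw [hc]; by_cases h0 : Rp b (0, 0) <;> simp [h0])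
  have keyT : ∀ (m : ZMod (L/2)) (j : ZMod L'),
      (Tp b (dbl L m + bit L c, j) ↔ j.val % 2 = (o m).toNat) := by
    intro m j
    have hj : (0 : ZMod L') + ((j.val : ℕ) : ZMod L') = j := by
      rw [ZMod.natCast_rightInverse j]; ring
    have h2 : Tp b (dbl L m + bit L c, j) ↔ (Tp b (dbl L m + bit L c, 0) ↔ Even j.val) := by
      conv_lhs => rw [← hj]
      exact T_nat hL' b hb1 hb2 hb3 j.val _ 0
    rw [h2, Nat.even_iff]
    exact parity_iff_helper (by rw [ho]; by_cases h0 : Tp b (dbl L m + bit L c, 0) <;> simp [h0])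
  ext s
  constructor
  · intro hs
    obtain ⟨i, j, rfl⟩ := hFs s hs
    have hfix : (i, j) = b (i, j) :=
      hb3 (i, j) i j hs (mem_face_iff.mpr ⟨Or.inl rfl, Or.inl rfl⟩)
    have hRij : Rp b (i, j) := by unfold Rp; rw [← hfix]
    have hTij : Tp b (i, j) := by unfold Tp; rw [← hfix]
    have hi2 : i.val % 2 = c.toNat := (keyR i j).mp hRij
    have hid : i = dbl L ((i.val / 2 : ℕ) : ZMod (L/2)) + bit L c :=
      decomp_of_parity hL heL hi2
    have hTij' : Tp b (dbl L ((i.val / 2 : ℕ) : ZMod (L/2)) + bit L c, j) := by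
      rw [← hid]; exact hTij
    have hj2 : j.val % 2 = (o ((i.val / 2 : ℕ) : ZMod (L/2))).toNat := (keyT _ j).mp hTij'
    have hjd : j = dbl L' ((j.val / 2 : ℕ) : ZMod (L'/2)) + bit L' (o ((i.val / 2 : ℕ) : ZMod (L/2))) :=
      decomp_of_parity hL' heL' hj2
    exact ⟨((i.val / 2 : ℕ) : ZMod (L/2)), ((j.val / 2 : ℕ) : ZMod (L'/2)), by rw [← hid, ← hjd]⟩
  · rintro ⟨m, k, rfl⟩
    have hbt := Bool.toNat_lt c
    have hbo := Bool.toNat_lt (o m)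
    have hi : (dbl L m + bit L c).val % 2 = c.toNat := by
      rw [val_dbl_add_bit hL heL]; omega
    have hj : (dbl L' k + bit L' (o m)).val % 2 = (o m).toNat := by
      rw [val_dbl_add_bit hL' heL']; omega
    have hR : Rp b (dbl L m + bit L c, dbl L' k + bit L' (o m)) := (keyR _ _).mpr hi
    have hT : Tp b (dbl L m + bit L c, dbl L' k + bit L' (o m)) := (keyT m _).mpr hj
    have hfix : b (dbl L m + bit L c, dbl L' k + bit L' (o m))
        = (dbl L m + bit L c, dbl L' k + bit L' (o m)) := Prod.ext hR hT
    have h5 := hb1 (dbl L m + bit L c, dbl L' k + bit L' (o m))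
    rw [hfix] at h5
    exact h5

end Classify

variable {L L' : ℕ} {F : Set (Set (ZMod L × ZMod L'))}

lemma classification (hL : 4 ≤ L) (hL' : 4 ≤ L') (heL : Even L) (heL' : Even L')
    (hF : IsPerfectFacePacking L L' F) :
    (∃ c o, F = phiH L L' c o) ∨ (∃ c o, F = phiV L L' c o) := by
  obtain ⟨hFs, hFu⟩ := hF
  have hbase : ∀ v : ZMod L × ZMod L', ∃ p : ZMod L × ZMod L',
      (faceVerts p.1 p.2 ∈ F ∧ v ∈ faceVerts p.1 p.2) ∧
      ∀ (i : ZMod L) (j : ZMod L'), faceVerts i j ∈ F → v ∈ faceVerts i j → (i, j) = p := by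
    intro v
    obtain ⟨s, ⟨hsF, hvs⟩, huniq⟩ := hFu v
    obtain ⟨i, j, rfl⟩ := hFs s hsF
    refine ⟨(i, j), ⟨hsF, hvs⟩, ?_⟩
    intro i' j' h1 h2
    have h3 := huniq (faceVerts i' j') ⟨h1, h2⟩
    obtain ⟨hi, hj⟩ := faceVerts_inj hL hL' h3
    rw [hi, hj]
  choose b hbm hb3 using hbase
  have hb1 : ∀ v, faceVerts (b v).1 (b v).2 ∈ F := fun v => (hbm v).1
  have hb2 : ∀ v, v ∈ faceVerts (b v).1 (b v).2 := fun v => (hbm v).2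
  by_cases hmis : ∃ (x : ZMod L) (y : ZMod L'), ¬ (Tp b (x, y) ↔ Tp b (x + 1, y))
  · right
    obtain ⟨x, y, hm⟩ := hmis
    exact assembleV hL hL' b hb1 hb2 hb3 heL heL'
      (fun x' y' y'' => R_col_const hL hL' b hb1 hb2 hb3 x y hm x' y' y'') hFs
  · left
    push_neg at hmis
    exact assembleH hL hL' b hb1 hb2 hb3 heL heL'
      (T_row_const hL b (fun x y => hmis x y)) hFs

lemma phiH_inj (hL : 4 ≤ L) (hL' : 4 ≤ L') (heL : Even L) (heL' : Even L') :
    Function.Injective (fun p : Bool × (ZMod (L'/2) → Bool) => phiH L L' p.1 p.2) := by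
  rintro ⟨c, o⟩ ⟨c', o'⟩ h
  dsimp at h
  have key : ∀ k : ZMod (L'/2), c = c' ∧ o k = o' k := by
    intro k
    have hmem : faceVerts (dbl L 0 + bit L (o k)) (dbl L' k + bit L' c) ∈ phiH L L' c o :=
      ⟨k, 0, rfl⟩
    rw [h] at hmem
    obtain ⟨k', m', heq⟩ := hmem
    obtain ⟨h1, h2⟩ := faceVerts_inj hL hL' heq
    obtain ⟨hk, hc2⟩ := decomp_inj hL' heL' h2
    obtain ⟨hm, hbo⟩ := decomp_inj hL heL h1
    refine ⟨hc2, ?_⟩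
    rw [hbo, ← hk]
  haveI : NeZero (L'/2) := ⟨by omega⟩
  rw [Prod.mk.injEq]
  exact ⟨(key 0).1, funext fun k => (key k).2⟩

lemma phiV_inj (hL : 4 ≤ L) (hL' : 4 ≤ L') (heL : Even L) (heL' : Even L') :
    Function.Injective (fun p : Bool × (ZMod (L/2) → Bool) => phiV L L' p.1 p.2) := by
  rintro ⟨c, o⟩ ⟨c', o'⟩ h
  dsimp at h
  have key : ∀ m : ZMod (L/2), c = c' ∧ o m = o' m := by
    intro m
    have hmem : faceVerts (dbl L m + bit L c) (dbl L' 0 + bit L' (o m)) ∈ phiV L L' c o :=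
      ⟨m, 0, rfl⟩
    rw [h] at hmem
    obtain ⟨m', k', heq⟩ := hmem
    obtain ⟨h1, h2⟩ := faceVerts_inj hL hL' heq
    obtain ⟨hm, hc2⟩ := decomp_inj hL heL h1
    obtain ⟨hk, hbo⟩ := decomp_inj hL' heL' h2
    refine ⟨hc2, ?_⟩
    rw [hbo, ← hm]
  haveI : NeZero (L/2) := ⟨by omega⟩
  rw [Prod.mk.injEq]
  exact ⟨(key 0).1, funext fun m => (key m).2⟩

lemma inter_char (hL : 4 ≤ L) (hL' : 4 ≤ L') (heL : Even L) (heL' : Even L')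
    {c c' : Bool} {o : ZMod (L'/2) → Bool} {o' : ZMod (L/2) → Bool}
    (h : phiH L L' c o = phiV L L' c' o') : o = (fun _ => c') := by
  funext k
  have hmem : faceVerts (dbl L 0 + bit L (o k)) (dbl L' k + bit L' c) ∈ phiH L L' c o :=
    ⟨k, 0, rfl⟩
  rw [h] at hmem
  obtain ⟨m', k'', heq⟩ := hmem
  obtain ⟨h1, h2⟩ := faceVerts_inj hL hL' heq
  exact (decomp_inj hL heL h1).2

lemma phiH_const_eq_phiV (c u : Bool) :
    phiH L L' c (fun _ => u) = phiV L L' u (fun _ => c) := by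
  ext s
  constructor
  · rintro ⟨k, m, rfl⟩; exact ⟨m, k, rfl⟩
  · rintro ⟨m, k, rfl⟩; exact ⟨k, m, rfl⟩

end TorusPack


/-- For the `L × L'` torus grid (`L, L'` even, `≥ 4`), the number of
perfect face packings is exactly `2(2^(L/2) + 2^(L'/2) - 2)`; in particular it is at
most `4(2^(L/2) + 2^(L'/2))`. -/
theorem torus_face_packing_count (L L' : ℕ)
    (heL : Even L) (heL' : Even L') (hL : 4 ≤ L) (hL' : 4 ≤ L') :
    {F : Set (Set (ZMod L × ZMod L')) | IsPerfectFacePacking L L' F}.ncard =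
        2 * (2 ^ (L / 2) + 2 ^ (L' / 2) - 2) ∧
    {F : Set (Set (ZMod L × ZMod L')) | IsPerfectFacePacking L L' F}.ncard ≤
        4 * (2 ^ (L / 2) + 2 ^ (L' / 2)) := by
  classical
  haveI : NeZero (L / 2) := ⟨by omega⟩
  haveI : NeZero (L' / 2) := ⟨by omega⟩
  set A := Set.range (fun p : Bool × (ZMod (L'/2) → Bool) => TorusPack.phiH L L' p.1 p.2) with hA
  set B := Set.range (fun p : Bool × (ZMod (L/2) → Bool) => TorusPack.phiV L L' p.1 p.2) with hB
  have hSet : {F : Set (Set (ZMod L × ZMod L')) | IsPerfectFacePacking L L' F} = A ∪ B := by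
    ext F
    simp only [Set.mem_setOf_eq, Set.mem_union, hA, hB, Set.mem_range]
    constructor
    · intro hF
      rcases TorusPack.classification hL hL' heL heL' hF with ⟨c, o, rfl⟩ | ⟨c, o, rfl⟩
      · exact Or.inl ⟨(c, o), rfl⟩
      · exact Or.inr ⟨(c, o), rfl⟩
    · rintro (⟨⟨c, o⟩, rfl⟩ | ⟨⟨c, o⟩, rfl⟩)
      · exact TorusPack.phiH_packing hL hL' heL heL' c o
      · exact TorusPack.phiV_packing hL hL' heL heL' c o
  have hcardA : A.ncard = 2 * 2 ^ (L' / 2) := by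
    rw [hA, ← Nat.card_coe_set_eq,
      Nat.card_range_of_injective (TorusPack.phiH_inj hL hL' heL heL')]
    simp [Nat.card_eq_fintype_card, Fintype.card_fun, ZMod.card]
  have hcardB : B.ncard = 2 * 2 ^ (L / 2) := by
    rw [hB, ← Nat.card_coe_set_eq,
      Nat.card_range_of_injective (TorusPack.phiV_inj hL hL' heL heL')]
    simp [Nat.card_eq_fintype_card, Fintype.card_fun, ZMod.card]
  have hI : (A ∩ B).ncard = 4 := by
    have hABr : A ∩ B
        = Set.range (fun p : Bool × Bool => TorusPack.phiH L L' p.1 (fun _ => p.2)) := by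
      ext s
      simp only [Set.mem_inter_iff, hA, hB, Set.mem_range]
      constructor
      · rintro ⟨⟨⟨c, o⟩, rfl⟩, ⟨⟨c', o'⟩, hV⟩⟩
        dsimp only at hV ⊢
        have ho := TorusPack.inter_char hL hL' heL heL' hV.symm
        exact ⟨(c, c'), by rw [ho]⟩
      · rintro ⟨⟨u, w⟩, rfl⟩
        dsimp only
        exact ⟨⟨(u, fun _ => w), rfl⟩,
          ⟨(w, fun _ => u), (TorusPack.phiH_const_eq_phiV u w).symm⟩⟩
    have hinj2 : Function.Injective
        (fun p : Bool × Bool => TorusPack.phiH L L' p.1 (fun _ => p.2)) := by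
      intro p q h
      have h2 := TorusPack.phiH_inj hL hL' heL heL'
        (a₁ := (p.1, fun _ => p.2)) (a₂ := (q.1, fun _ => q.2)) h
      rw [Prod.mk.injEq] at h2
      exact Prod.ext h2.1 (congrFun h2.2 0)
    rw [hABr, ← Nat.card_coe_set_eq, Nat.card_range_of_injective hinj2]
    simp [Nat.card_eq_fintype_card]
  have hun := Set.ncard_union_add_ncard_inter A B (Set.finite_range _) (Set.finite_range _)
  rw [hcardA, hcardB, hI] at hun
  have h4 : (4 : ℕ) ≤ 2 ^ (L / 2) := by
    calc (4 : ℕ) = 2 ^ 2 := by norm_num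
    _ ≤ 2 ^ (L / 2) := Nat.pow_le_pow_right (by norm_num) (by omega)
  have h4' : (4 : ℕ) ≤ 2 ^ (L' / 2) := by
    calc (4 : ℕ) = 2 ^ 2 := by norm_num
    _ ≤ 2 ^ (L' / 2) := Nat.pow_le_pow_right (by norm_num) (by omega)
  rw [hSet]
  omega
end

section
/- Let b_f† for a face f denote the sum of signed bosonic creation operators around the 4-cycle f. For a closed column of 4L₁ faces labelled a_i, b_i, c_i, d_i (i = 1,…,L₁, indices mod L₁, L₁ even ≥ 2), define |↑⟩ = ∏_{i odd} a_i† c_i† ∏_{i even} b_i† d_i† |0⟩ and |↓⟩ = ∏_{i odd} b_i† d_i† ∏_{i even} a_i† c_i† |0⟩. Then ⟨↑|↑⟩ = ⟨↓|↓⟩ = 4^{2L₁} and |⟨↑|↓⟩| < 4^{2L₁}; consequently the Gram matrix of {|↑⟩, |↓⟩} has positive determinant and the two states are linearly independent. -/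
open MvPolynomial

/-!
Bosonic Fock space over the edge set `E`, modelled as `MvPolynomial E ℂ`:
the monomial `X^α` represents the state `∏ (b_e†)^(α e) |0⟩`, and the Fock space
inner product is `⟨X^α, X^β⟩ = α! δ_{αβ}` (so that `b_e† = X_e ·` and `b_e = ∂_e`
satisfy the canonical commutation relations).
-/

/-- The bosonic Fock space inner product on `MvPolynomial E ℂ`
(antilinear in the first argument). -/
noncomputable def wInner {E : Type*} [DecidableEq E] (p q : MvPolynomial E ℂ) : ℂ :=
  ∑ α ∈ p.support ∪ q.support,
    (∏ e ∈ α.support, (Nat.factorial (α e) : ℂ)) *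
      (starRingEnd ℂ) (MvPolynomial.coeff α p) * MvPolynomial.coeff α q

/-- The faces of a closed column of length `L`: at each height `i : ZMod L` there are
four faces `(i,0) = aᵢ`, `(i,1) = bᵢ`, `(i,2) = cᵢ`, `(i,3) = dᵢ` arranged in a ring. -/
abbrev ColFace (L : ℕ) := ZMod L × ZMod 4

/-- Adjacency of column faces (faces sharing exactly one edge): around the ring
`aᵢ - bᵢ - cᵢ - dᵢ - aᵢ` at the same height, and between consecutive heights for the
same letter. -/
def colAdj {L : ℕ} (f g : ColFace L) : Prop :=
  (f.1 = g.1 ∧ (g.2 = f.2 + 1 ∨ f.2 = g.2 + 1)) ∨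
  (f.2 = g.2 ∧ (g.1 = f.1 + 1 ∨ f.1 = g.1 + 1))

instance {L : ℕ} (f g : ColFace L) : Decidable (colAdj f g) := by
  unfold colAdj; infer_instance

/-- The faces occupied in the state `|↑⟩`: `aᵢ, cᵢ` for odd `i` and `bᵢ, dᵢ`
for even `i`. (`|↓⟩` occupies the complementary pattern.) -/
def upFace {L : ℕ} (f : ColFace L) : Prop :=
  (Odd f.1.val ∧ (f.2 = 0 ∨ f.2 = 2)) ∨ (Even f.1.val ∧ (f.2 = 1 ∨ f.2 = 3))

instance {L : ℕ} (f : ColFace L) : Decidable (upFace f) := by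
  unfold upFace; infer_instance

/-- The face creation operator applied to the vacuum:
`b_f† |0⟩ = ∑ e σ_f(e) b_e† |0⟩` for the signed (±1) indicator `σ f` of the four
edges of the face `f`. -/
noncomputable def facePoly {E : Type*} [Fintype E] {L : ℕ}
    (σ : ColFace L → E → ℤ) (f : ColFace L) : MvPolynomial E ℂ :=
  ∑ e : E, (σ f e : ℂ) • X e

/-- The state `|↑⟩ = ∏_{i odd} aᵢ† cᵢ† ∏_{i even} bᵢ† dᵢ† |0⟩`. -/
noncomputable def upState {E : Type*} [Fintype E] {L : ℕ} [NeZero L]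
    (σ : ColFace L → E → ℤ) : MvPolynomial E ℂ :=
  ∏ f ∈ Finset.univ.filter (fun f : ColFace L => upFace f), facePoly σ f

/-- The state `|↓⟩ = ∏_{i odd} bᵢ† dᵢ† ∏_{i even} aᵢ† cᵢ† |0⟩`. -/
noncomputable def downState {E : Type*} [Fintype E] {L : ℕ} [NeZero L]
    (σ : ColFace L → E → ℤ) : MvPolynomial E ℂ :=
  ∏ f ∈ Finset.univ.filter (fun f : ColFace L => ¬ upFace f), facePoly σ f

/-!
Wick's theorem reduces the inner products to contractions: `b_v†|0⟩` is the linear form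
`∑ₑ vₑ Xₑ`, `b_v` is the derivation `∑ₑ conj vₑ ∂ₑ`, and `Xₑ ·` is adjoint to `∂ₑ`, so
`⟨b_a† P, ∏ⱼ b_j†⟩ = ∑ⱼ [b_a, b_j†] ⟨P, ∏_{k ≠ j} b_k†⟩` by the Leibniz rule.
Since `L` is even, adjacent faces always lie in different states, so within `|↑⟩` (or `|↓⟩`)
only the diagonal contraction `4` survives and `⟨↑|↑⟩ = 4^{2L}`. In `⟨↑|↓⟩` an up face has at
most four down neighbours, each contracting to `-1`, so every expansion step costs at most a
factor `4`; two up faces sharing two down neighbours make the first two steps cost `14`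
instead of `16`, whence `|⟨↑|↓⟩| ≤ 14 · 4^{2L-2} < 4^{2L}`. The Gram determinant is then
nonzero, which gives linear independence.
-/

section

variable {E : Type*}

/-- `α!`, the squared norm of the monomial `X^α`. -/
noncomputable def multiIndexFactorial (α : E →₀ ℕ) : ℂ :=
  ∏ e ∈ α.support, ((α e).factorial : ℂ)

lemma multiIndexFactorial_eq_prod_of_subset {α : E →₀ ℕ} {s : Finset E}
    (h : α.support ⊆ s) : multiIndexFactorial α = ∏ e ∈ s, ((α e).factorial : ℂ) :=
  Finset.prod_subset h fun e _ he => by simp [Finsupp.notMem_support_iff.1 he]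

section Fock

variable [DecidableEq E]

lemma multiIndexFactorial_add_single (α : E →₀ ℕ) (e : E) :
    multiIndexFactorial (α + Finsupp.single e 1) = ((α e : ℂ) + 1) * multiIndexFactorial α := by
  have hsupp : (α + Finsupp.single e 1).support ⊆ insert e α.support :=
    Finsupp.support_add.trans <| Finset.union_subset (Finset.subset_insert _ _)
      (Finsupp.support_single_subset.trans (by simp))
  rw [multiIndexFactorial_eq_prod_of_subset hsupp,
    multiIndexFactorial_eq_prod_of_subset (Finset.subset_insert e α.support),
    ← Finset.mul_prod_erase _ _ (Finset.mem_insert_self e _),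
    ← Finset.mul_prod_erase _ _ (Finset.mem_insert_self e _),
    Finset.prod_congr rfl fun x hx => by
      rw [Finsupp.add_apply, Finsupp.single_eq_of_ne (Finset.ne_of_mem_erase hx), add_zero]]
  simp [Nat.factorial_succ, mul_assoc]

lemma wInner_eq_sum_of_subset {p q : MvPolynomial E ℂ} {s : Finset (E →₀ ℕ)}
    (h : p.support ∩ q.support ⊆ s) :
    wInner p q = ∑ α ∈ s, multiIndexFactorial α * starRingEnd ℂ (p.coeff α) * q.coeff α := by
  have hvanish : ∀ α ∉ p.support ∩ q.support,
      multiIndexFactorial α * starRingEnd ℂ (p.coeff α) * q.coeff α = 0 := by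
    intro α hα
    rcases not_and_or.1 (mt Finset.mem_inter.2 hα) with hp | hq
    · simp [notMem_support_iff.1 hp]
    · simp [notMem_support_iff.1 hq]
  calc wInner p q
      = ∑ α ∈ p.support ∪ q.support ∪ s,
          multiIndexFactorial α * starRingEnd ℂ (p.coeff α) * q.coeff α :=
        Finset.sum_subset Finset.subset_union_left fun α _ hα =>
          hvanish α fun h' => hα (Finset.inter_subset_union h')
    _ = _ := (Finset.sum_subset Finset.subset_union_right fun α _ hα =>
          hvanish α fun h' => hα (h h')).symm

lemma wInner_eq_sum_support_left (p q : MvPolynomial E ℂ) :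
    wInner p q = ∑ α ∈ p.support,
      multiIndexFactorial α * starRingEnd ℂ (p.coeff α) * q.coeff α :=
  wInner_eq_sum_of_subset Finset.inter_subset_left

lemma wInner_eq_sum_support_right (p q : MvPolynomial E ℂ) :
    wInner p q = ∑ α ∈ q.support,
      multiIndexFactorial α * starRingEnd ℂ (p.coeff α) * q.coeff α :=
  wInner_eq_sum_of_subset Finset.inter_subset_right

lemma wInner_zero_right (p : MvPolynomial E ℂ) : wInner p 0 = 0 := by
  simp [wInner_eq_sum_support_left]

lemma wInner_add_right (p q r : MvPolynomial E ℂ) :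
    wInner p (q + r) = wInner p q + wInner p r := by
  simp only [wInner_eq_sum_support_left p, coeff_add, mul_add, Finset.sum_add_distrib]

lemma wInner_smul_right (c : ℂ) (p q : MvPolynomial E ℂ) :
    wInner p (c • q) = c * wInner p q := by
  simp only [wInner_eq_sum_support_left p, coeff_smul, smul_eq_mul, Finset.mul_sum]
  exact Finset.sum_congr rfl fun _ _ => by ring

lemma wInner_sum_right {ι : Type*} (p : MvPolynomial E ℂ) (t : Finset ι)
    (q : ι → MvPolynomial E ℂ) : wInner p (∑ j ∈ t, q j) = ∑ j ∈ t, wInner p (q j) := by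
  simp only [wInner_eq_sum_support_left p, coeff_sum, Finset.mul_sum]
  exact Finset.sum_comm

lemma wInner_add_left (p q r : MvPolynomial E ℂ) :
    wInner (p + q) r = wInner p r + wInner q r := by
  simp only [wInner_eq_sum_support_right _ r, coeff_add, map_add, mul_add, add_mul,
    Finset.sum_add_distrib]

lemma wInner_smul_left (c : ℂ) (p q : MvPolynomial E ℂ) :
    wInner (c • p) q = starRingEnd ℂ c * wInner p q := by
  simp only [wInner_eq_sum_support_right _ q, coeff_smul, smul_eq_mul, map_mul, Finset.mul_sum]
  exact Finset.sum_congr rfl fun _ _ => by ring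

lemma wInner_sum_left {ι : Type*} (q : MvPolynomial E ℂ) (t : Finset ι)
    (p : ι → MvPolynomial E ℂ) : wInner (∑ j ∈ t, p j) q = ∑ j ∈ t, wInner (p j) q := by
  simp only [wInner_eq_sum_support_right _ q, coeff_sum, map_sum, Finset.mul_sum, Finset.sum_mul]
  exact Finset.sum_comm

lemma wInner_swap (p q : MvPolynomial E ℂ) : wInner q p = starRingEnd ℂ (wInner p q) := by
  rw [wInner, wInner, Finset.union_comm, map_sum]
  refine Finset.sum_congr rfl fun α _ => ?_
  simp only [map_mul, map_prod, map_natCast, Complex.conj_conj]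
  ring

lemma wInner_monomial (α β : E →₀ ℕ) (c d : ℂ) :
    wInner (monomial α c) (monomial β d) =
      if α = β then multiIndexFactorial α * starRingEnd ℂ c * d else 0 := by
  rw [wInner_eq_sum_of_subset (Finset.inter_subset_right.trans support_monomial_subset),
    Finset.sum_singleton, coeff_monomial, coeff_monomial, if_pos rfl]
  split_ifs with h <;> simp [h]

lemma wInner_one_left (q : MvPolynomial E ℂ) : wInner 1 q = constantCoeff q := by
  rw [wInner_eq_sum_of_subset (Finset.inter_subset_left.trans support_one.subset),
    Finset.sum_singleton]
  simp [multiIndexFactorial, constantCoeff_eq]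

lemma wInner_X_mul (e : E) (p q : MvPolynomial E ℂ) :
    wInner (X e * p) q = wInner p (pderiv e q) := by
  induction q using MvPolynomial.induction_on' generalizing p with
  | add q₁ q₂ ih₁ ih₂ => rw [map_add, wInner_add_right, wInner_add_right, ih₁, ih₂]
  | monomial β d =>
    induction p using MvPolynomial.induction_on' with
    | add p₁ p₂ ih₁ ih₂ => rw [mul_add, wInner_add_left, wInner_add_left, ih₁, ih₂]
    | monomial α c =>
      rw [X, monomial_mul, one_mul, pderiv_monomial, wInner_monomial, wInner_monomial,
        add_comm (Finsupp.single e 1)]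
      by_cases hβ : Finsupp.single e 1 ≤ β
      · have hiff : α + Finsupp.single e 1 = β ↔ α = β - Finsupp.single e 1 :=
          ⟨fun h => by rw [← h, add_tsub_cancel_right],
            fun h => by rw [h, tsub_add_cancel_of_le hβ]⟩
        split_ifs with h h' h'
        · rw [multiIndexFactorial_add_single, ← h, Finsupp.add_apply, Finsupp.single_eq_same]
          push_cast
          ring
        · exact absurd (hiff.1 h) h'
        · exact absurd (hiff.2 h') h
        · rfl
      · have hβe : β e = 0 := by simpa [Finsupp.single_le_iff] using hβ
        have hne : α + Finsupp.single e 1 ≠ β := fun h => by simp [← h] at hβe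
        simp [hne, hβe]

lemma linearIndependent_pair_of_wInner_det_ne_zero {p q : MvPolynomial E ℂ}
    (h : wInner p p * wInner q q - wInner p q * wInner q p ≠ 0) :
    LinearIndependent ℂ ![p, q] := by
  rw [LinearIndependent.pair_iff]
  intro s t hst
  have hp := congrArg (wInner p) hst
  have hq := congrArg (wInner q) hst
  simp only [wInner_add_right, wInner_smul_right, wInner_zero_right] at hp hq
  exact ⟨(mul_eq_zero.1 (by linear_combination wInner q q * hp - wInner p q * hq)).resolve_right h,
    (mul_eq_zero.1 (by linear_combination wInner p p * hq - wInner q p * hp)).resolve_right h⟩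

end Fock

theorem Derivation.leibniz_prod {R A M ι : Type*} [CommSemiring R] [CommSemiring A]
    [Algebra R A] [AddCommMonoid M] [Module A M] [Module R M] [DecidableEq ι]
    (D : Derivation R A M) (s : Finset ι) (f : ι → A) :
    D (∏ i ∈ s, f i) = ∑ i ∈ s, (∏ j ∈ s.erase i, f j) • D (f i) := by
  induction s using Finset.induction with
  | empty => simp
  | @insert a s ha ih =>
    rw [Finset.prod_insert ha, D.leibniz, ih, Finset.sum_insert ha, Finset.erase_insert ha,
      Finset.smul_sum, add_comm]
    congr 1
    refine Finset.sum_congr rfl fun i hi => ?_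
    rw [Finset.erase_insert_of_ne (ne_of_mem_of_not_mem hi ha).symm,
      Finset.prod_insert fun h => ha (Finset.mem_of_mem_erase h), mul_smul]

section Wick

variable [Fintype E]

/-- The one-particle state `b_v† |0⟩ = ∑ₑ v e • b_e† |0⟩`. -/
noncomputable def linearForm (v : E → ℂ) : MvPolynomial E ℂ := ∑ e, v e • X e

/-- For `w = star v` this is the annihilation operator `b_v`. -/
noncomputable def directionalDeriv (w : E → ℂ) :
    Derivation ℂ (MvPolynomial E ℂ) (MvPolynomial E ℂ) :=
  ∑ e, w e • pderiv e

lemma directionalDeriv_apply (w : E → ℂ) (q : MvPolynomial E ℂ) :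
    directionalDeriv w q = ∑ e, w e • pderiv e q := by
  rw [directionalDeriv, ← Derivation.coeFnAddMonoidHom_apply, map_sum, Finset.sum_apply]
  rfl

lemma directionalDeriv_linearForm [DecidableEq E] (w v : E → ℂ) :
    directionalDeriv w (linearForm v) = C (w ⬝ᵥ v) := by
  simp [directionalDeriv_apply, linearForm, pderiv_X, Pi.single_apply, dotProduct,
    smul_eq_C_mul, mul_comm]

variable [DecidableEq E]

lemma wInner_linearForm_mul (v : E → ℂ) (p q : MvPolynomial E ℂ) :
    wInner (linearForm v * p) q = wInner p (directionalDeriv (star v) q) := by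
  simp only [linearForm, Finset.sum_mul, smul_mul_assoc, wInner_sum_left, wInner_smul_left,
    wInner_X_mul, directionalDeriv_apply, wInner_sum_right, wInner_smul_right, Pi.star_apply,
    Complex.star_def]

variable {ι : Type*} [DecidableEq ι] (v : ι → E → ℂ)

/-- One step of Wick's theorem. -/
lemma wInner_prod_linearForm (s t : Finset ι) {a : ι} (ha : a ∈ s) :
    wInner (∏ i ∈ s, linearForm (v i)) (∏ j ∈ t, linearForm (v j)) =
      ∑ j ∈ t, star (v a) ⬝ᵥ v j *
        wInner (∏ i ∈ s.erase a, linearForm (v i)) (∏ k ∈ t.erase j, linearForm (v k)) := by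
  rw [← Finset.mul_prod_erase s _ ha, wInner_linearForm_mul, Derivation.leibniz_prod,
    wInner_sum_right]
  refine Finset.sum_congr rfl fun j _ => ?_
  rw [directionalDeriv_linearForm, smul_eq_mul, mul_comm, C_mul', wInner_smul_right]

lemma wInner_one_prod_linearForm (t : Finset ι) :
    wInner 1 (∏ j ∈ t, linearForm (v j)) = if t = ∅ then 1 else 0 := by
  rw [wInner_one_left, map_prod]
  split_ifs with ht
  · simp [ht]
  · obtain ⟨j, hj⟩ := Finset.nonempty_iff_ne_empty.2 ht
    exact Finset.prod_eq_zero hj (by simp [linearForm])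

lemma wInner_prod_linearForm_self (c : ℂ) (s : Finset ι)
    (h : ∀ i ∈ s, ∀ j ∈ s, star (v i) ⬝ᵥ v j = if i = j then c else 0) :
    wInner (∏ i ∈ s, linearForm (v i)) (∏ i ∈ s, linearForm (v i)) = c ^ s.card := by
  induction s using Finset.induction with
  | empty => simpa using wInner_one_prod_linearForm v ∅
  | @insert a s ha ih =>
    have hs : ∀ i ∈ s, ∀ j ∈ s, star (v i) ⬝ᵥ v j = if i = j then c else 0 :=
      fun i hi j hj => h i (Finset.mem_insert_of_mem hi) j (Finset.mem_insert_of_mem hj)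
    rw [wInner_prod_linearForm v _ _ (Finset.mem_insert_self a s),
      Finset.sum_eq_single_of_mem a (Finset.mem_insert_self a s) fun j hj hja => by
        rw [h a (Finset.mem_insert_self a s) j hj, if_neg hja.symm, zero_mul],
      h a (Finset.mem_insert_self a s) a (Finset.mem_insert_self a s), if_pos rfl,
      Finset.erase_insert ha, ih hs, Finset.card_insert_of_notMem ha, pow_succ']

lemma norm_wInner_prod_linearForm_le_sum {s t : Finset ι} {a : ι} (ha : a ∈ s) (B : ι → ℝ)
    (hB : ∀ j ∈ t, ‖wInner (∏ i ∈ s.erase a, linearForm (v i))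
      (∏ k ∈ t.erase j, linearForm (v k))‖ ≤ B j) :
    ‖wInner (∏ i ∈ s, linearForm (v i)) (∏ j ∈ t, linearForm (v j))‖ ≤
      ∑ j ∈ t, ‖star (v a) ⬝ᵥ v j‖ * B j := by
  rw [wInner_prod_linearForm v s t ha]
  refine (norm_sum_le _ _).trans (Finset.sum_le_sum fun j hj => ?_)
  rw [norm_mul]
  exact mul_le_mul_of_nonneg_left (hB j hj) (norm_nonneg _)

lemma norm_wInner_prod_linearForm_le (r : ℝ) (s t : Finset ι)
    (hrow : ∀ i ∈ s, ∑ j ∈ t, ‖star (v i) ⬝ᵥ v j‖ ≤ r) :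
    ‖wInner (∏ i ∈ s, linearForm (v i)) (∏ j ∈ t, linearForm (v j))‖ ≤ r ^ s.card := by
  induction s using Finset.induction generalizing t with
  | empty =>
    rw [Finset.prod_empty, wInner_one_prod_linearForm]
    split_ifs <;> simp
  | @insert a s ha ih =>
    have has := Finset.mem_insert_self a s
    have hr : 0 ≤ r := (Finset.sum_nonneg fun _ _ => norm_nonneg _).trans (hrow a has)
    calc _ ≤ ∑ j ∈ t, ‖star (v a) ⬝ᵥ v j‖ * r ^ s.card := by
          refine norm_wInner_prod_linearForm_le_sum v has _ fun j _ => ?_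
          rw [Finset.erase_insert ha]
          refine ih _ fun i hi => le_trans ?_ (hrow i (Finset.mem_insert_of_mem hi))
          exact Finset.sum_le_sum_of_subset_of_nonneg (Finset.erase_subset j t)
            fun _ _ _ => norm_nonneg _
      _ ≤ r * r ^ s.card := by
          rw [← Finset.sum_mul]
          exact mul_le_mul_of_nonneg_right (hrow a has) (pow_nonneg hr _)
      _ = r ^ (insert a s).card := by rw [Finset.card_insert_of_notMem ha, pow_succ']

/-- A ket factor contracted with `a` is no longer available to `a'`, which saves the overlap `δ`. -/
lemma norm_wInner_prod_linearForm_le_of_overlap (r δ : ℝ) {n : ℕ} {s t : Finset ι}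
    (hs : s.card = n + 2) {a a' : ι} (ha : a ∈ s) (ha' : a' ∈ s) (hne : a ≠ a')
    (hrow : ∀ i ∈ s, ∑ j ∈ t, ‖star (v i) ⬝ᵥ v j‖ ≤ r)
    (hδ : δ ≤ ∑ j ∈ t, ‖star (v a) ⬝ᵥ v j‖ * ‖star (v a') ⬝ᵥ v j‖) :
    ‖wInner (∏ i ∈ s, linearForm (v i)) (∏ j ∈ t, linearForm (v j))‖ ≤ (r ^ 2 - δ) * r ^ n := by
  set c : ι → ι → ℝ := fun i j => ‖star (v i) ⬝ᵥ v j‖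
  have hc : ∀ i j, 0 ≤ c i j := fun _ _ => norm_nonneg _
  have ha'' : a' ∈ s.erase a := Finset.mem_erase.2 ⟨hne.symm, ha'⟩
  have hcard : ((s.erase a).erase a').card = n := by
    rw [Finset.card_erase_of_mem ha'', Finset.card_erase_of_mem ha, hs]; rfl
  have hr : 0 ≤ r := (Finset.sum_nonneg fun _ _ => hc _ _).trans (hrow a ha)
  have hinner : ∀ j ∈ t, ‖wInner (∏ i ∈ s.erase a, linearForm (v i))
      (∏ k ∈ t.erase j, linearForm (v k))‖ ≤ (∑ k ∈ t, c a' k - c a' j) * r ^ n := by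
    intro j hj
    rw [← Finset.sum_erase_eq_sub hj, Finset.sum_mul]
    refine norm_wInner_prod_linearForm_le_sum v ha'' _ fun k _ => ?_
    rw [← hcard]
    refine norm_wInner_prod_linearForm_le v r _ _ fun i hi => le_trans ?_ (hrow i
      (Finset.mem_of_mem_erase (Finset.mem_of_mem_erase hi)))
    exact Finset.sum_le_sum_of_subset_of_nonneg
      ((Finset.erase_subset _ _).trans (Finset.erase_subset _ _)) fun _ _ _ => hc _ _
  set S' := ∑ k ∈ t, c a' k
  have hS' : 0 ≤ S' := Finset.sum_nonneg fun _ _ => hc _ _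
  calc _ ≤ ∑ j ∈ t, c a j * ((S' - c a' j) * r ^ n) :=
        norm_wInner_prod_linearForm_le_sum v ha _ hinner
    _ = ((∑ j ∈ t, c a j) * S' - ∑ j ∈ t, c a j * c a' j) * r ^ n := by
        rw [sub_mul, Finset.sum_mul, Finset.sum_mul, Finset.sum_mul, ← Finset.sum_sub_distrib]
        exact Finset.sum_congr rfl fun _ _ => by ring
    _ ≤ (r ^ 2 - δ) * r ^ n := by
        gcongr
        nlinarith [hrow a ha, hrow a' ha']

end Wick

section Column

variable {L : ℕ}

lemma upFace_iff (f : ColFace L) : upFace f ↔ (Odd f.1.val ↔ f.2 = 0 ∨ f.2 = 2) := by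
  have h4 : ∀ c : ZMod 4, (c = 1 ∨ c = 3) ↔ ¬(c = 0 ∨ c = 2) := by decide
  rw [upFace, h4, ← Nat.not_odd_iff_even]
  tauto

lemma odd_val_add_one_iff (hL : Even L) [NeZero L] (i : ZMod L) :
    Odd (i + 1).val ↔ ¬Odd i.val := by
  have : Fact (1 < L) := ⟨by obtain ⟨k, rfl⟩ := hL; have := NeZero.ne (k + k); omega⟩
  rw [ZMod.val_add, ZMod.val_one, Nat.odd_iff, Nat.mod_mod_of_dvd _ hL.two_dvd, ← Nat.odd_iff,
    Nat.odd_add_one]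

lemma upFace_add_one_snd (i : ZMod L) (c : ZMod 4) : upFace (i, c + 1) ↔ ¬upFace (i, c) := by
  have h4 : (c + 1 = 0 ∨ c + 1 = 2) ↔ ¬(c = 0 ∨ c = 2) := by revert c; decide
  rw [upFace_iff, upFace_iff, h4]
  tauto

lemma upFace_iff_not_of_colAdj (hL : Even L) [NeZero L] {f g : ColFace L} (h : colAdj f g) :
    upFace f ↔ ¬upFace g := by
  obtain ⟨f₁, f₂⟩ := f
  obtain ⟨g₁, g₂⟩ := g
  simp only [colAdj] at h
  rcases h with ⟨rfl, rfl | rfl⟩ | ⟨rfl, rfl | rfl⟩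
  · rw [upFace_add_one_snd, not_not]
  · exact upFace_add_one_snd _ _
  all_goals rw [upFace_iff, upFace_iff, odd_val_add_one_iff hL]; tauto

lemma not_colAdj_of_upFace_iff (hL : Even L) [NeZero L] {f g : ColFace L}
    (h : upFace f ↔ upFace g) : ¬colAdj f g := fun hfg => by
  have := upFace_iff_not_of_colAdj hL hfg
  tauto

lemma card_filter_colAdj_le (f : ColFace L) (t : Finset (ColFace L)) :
    (t.filter fun g => colAdj f g).card ≤ 4 := by
  have hsub : t.filter (fun g => colAdj f g) ⊆
      {(f.1, f.2 + 1), (f.1, f.2 - 1), (f.1 + 1, f.2), (f.1 - 1, f.2)} := by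
    obtain ⟨f₁, f₂⟩ := f
    rintro ⟨g₁, g₂⟩ hg
    have hadj := (Finset.mem_filter.1 hg).2
    simp only [colAdj] at hadj
    rcases hadj with ⟨rfl, rfl | rfl⟩ | ⟨rfl, rfl | rfl⟩ <;> simp
  exact (Finset.card_le_card hsub).trans Finset.card_le_four

variable [NeZero L]

lemma card_filter_upFace_eq_card_filter_not_upFace :
    (Finset.univ.filter fun f : ColFace L => upFace f).card =
      (Finset.univ.filter fun f : ColFace L => ¬upFace f).card :=
  Finset.card_bij' (fun f _ => (f.1, f.2 + 1)) (fun f _ => (f.1, f.2 - 1))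
    (fun f hf => by simpa [upFace_add_one_snd] using hf)
    (fun f hf => by
      have := upFace_add_one_snd f.1 (f.2 - 1)
      simp only [sub_add_cancel, Prod.mk.eta, Finset.mem_filter, Finset.mem_univ,
        true_and] at this hf ⊢
      exact not_not.1 (mt this.2 hf))
    (fun _ _ => by simp) (fun _ _ => by simp)

lemma card_filter_upFace : (Finset.univ.filter fun f : ColFace L => upFace f).card = 2 * L := by
  have htot := Finset.card_filter_add_card_filter_not
    (s := (Finset.univ : Finset (ColFace L))) (p := fun f => upFace f)
  rw [← card_filter_upFace_eq_card_filter_not_upFace, Finset.card_univ, Fintype.card_prod,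
    ZMod.card, ZMod.card] at htot
  omega

lemma card_filter_not_upFace :
    (Finset.univ.filter fun f : ColFace L => ¬upFace f).card = 2 * L :=
  card_filter_upFace_eq_card_filter_not_upFace.symm.trans card_filter_upFace

end Column

section ColumnStates

variable [Fintype E] {L : ℕ}

/-- `∑ₑ σ f e * σ g e` is the commutator `[b_f, b_g†]`. -/
def HasColumnCommutators (σ : ColFace L → E → ℤ) : Prop :=
  ∀ f g, ∑ e, σ f e * σ g e = if f = g then 4 else if colAdj f g then -1 else 0

variable {σ : ColFace L → E → ℤ}

lemma HasColumnCommutators.star_dotProduct (hσ : HasColumnCommutators σ) (f g : ColFace L) :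
    star (fun e => (σ f e : ℂ)) ⬝ᵥ (fun e => (σ g e : ℂ)) =
      if f = g then 4 else if colAdj f g then -1 else 0 := by
  simp only [dotProduct, Pi.star_apply, star_intCast]
  exact_mod_cast hσ f g

lemma HasColumnCommutators.sum_norm_star_dotProduct_le (hσ : HasColumnCommutators σ)
    {f : ColFace L} {t : Finset (ColFace L)} (hf : f ∉ t) :
    ∑ g ∈ t, ‖star (fun e => (σ f e : ℂ)) ⬝ᵥ (fun e => (σ g e : ℂ))‖ ≤ 4 := by
  calc _ = ∑ g ∈ t, if colAdj f g then (1 : ℝ) else 0 :=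
        Finset.sum_congr rfl fun g hg => by
          rw [hσ.star_dotProduct, if_neg (ne_of_mem_of_not_mem hg hf).symm]
          split_ifs <;> simp
    _ ≤ 4 := by
        rw [Finset.sum_boole]
        exact_mod_cast card_filter_colAdj_le f t

variable [DecidableEq E]

lemma HasColumnCommutators.wInner_prod_self (hσ : HasColumnCommutators σ)
    (s : Finset (ColFace L)) (hs : ∀ f ∈ s, ∀ g ∈ s, ¬colAdj f g) :
    wInner (∏ f ∈ s, facePoly σ f) (∏ f ∈ s, facePoly σ f) = 4 ^ s.card :=
  wInner_prod_linearForm_self (fun f e => (σ f e : ℂ)) 4 s fun f hf g hg => by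
    rw [hσ.star_dotProduct, if_neg (hs f hf g hg)]

variable [NeZero L]

/-- The up faces `(0,1), (0,3)` share the two down neighbours `(0,0), (0,2)`, so the row-sum
bound `16 · 4 ^ (2L - 2)` improves to `14 · 4 ^ (2L - 2)`. -/
lemma HasColumnCommutators.norm_wInner_upState_downState_lt (hσ : HasColumnCommutators σ) :
    ‖wInner (upState σ) (downState σ)‖ < 4 ^ (2 * L) := by
  set v : ColFace L → E → ℂ := fun f e => σ f e
  have hL1 : 1 ≤ L := Nat.one_le_iff_ne_zero.2 (NeZero.ne L)
  have hcard : (Finset.univ.filter fun f : ColFace L => upFace f).card = (2 * L - 2) + 2 := by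
    rw [card_filter_upFace]; omega
  have hrow : ∀ f ∈ Finset.univ.filter (fun f : ColFace L => upFace f),
      ∑ g ∈ Finset.univ.filter (fun f : ColFace L => ¬upFace f), ‖star (v f) ⬝ᵥ v g‖ ≤ 4 :=
    fun f hf => hσ.sum_norm_star_dotProduct_le (by simpa using hf)
  have hoverlap : (2 : ℝ) ≤ ∑ g ∈ Finset.univ.filter (fun f : ColFace L => ¬upFace f),
      ‖star (v (0, 1)) ⬝ᵥ v g‖ * ‖star (v (0, 3)) ⬝ᵥ v g‖ := by
    have hsub : {(0, 0), (0, 2)} ⊆ Finset.univ.filter (fun f : ColFace L => ¬upFace f) := by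
      simp +decide [Finset.insert_subset_iff, upFace]
    refine le_of_eq_of_le ?_ (Finset.sum_le_sum_of_subset_of_nonneg hsub fun _ _ _ => by positivity)
    rw [Finset.sum_pair (by simp +decide)]
    simp +decide [v, hσ.star_dotProduct, colAdj, one_add_one_eq_two]
  calc _ ≤ ((4 : ℝ) ^ 2 - 2) * 4 ^ (2 * L - 2) :=
        norm_wInner_prod_linearForm_le_of_overlap v 4 2 hcard
          (Finset.mem_filter.2 ⟨Finset.mem_univ _, by simp +decide [upFace]⟩)
          (Finset.mem_filter.2 ⟨Finset.mem_univ _, by simp +decide [upFace]⟩)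
          (by simp +decide) hrow hoverlap
    _ < 4 ^ 2 * 4 ^ (2 * L - 2) := by gcongr; norm_num
    _ = 4 ^ (2 * L) := by rw [← pow_add]; congr 1; omega

end ColumnStates

end

theorem column_rotation_lin_indep_general {E : Type*} [Fintype E] [DecidableEq E]
    (L : ℕ) [NeZero L] (hL : Even L)
    (σ : ColFace L → E → ℤ)
    (hcomm : ∀ f g : ColFace L, (∑ e : E, σ f e * σ g e) =
      if f = g then 4 else if colAdj f g then -1 else 0) :
    wInner (upState σ) (upState σ) = (4 : ℂ) ^ (2 * L) ∧
    wInner (downState σ) (downState σ) = (4 : ℂ) ^ (2 * L) ∧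
    ‖wInner (upState σ) (downState σ)‖ < 4 ^ (2 * L) ∧
    0 < (4 : ℝ) ^ (2 * L) * (4 : ℝ) ^ (2 * L)
        - ‖wInner (upState σ) (downState σ)‖ ^ 2 ∧
    LinearIndependent ℂ ![upState σ, downState σ] := by
  have hσ : HasColumnCommutators σ := hcomm
  have hup : wInner (upState σ) (upState σ) = (4 : ℂ) ^ (2 * L) := by
    rw [upState, hσ.wInner_prod_self _ fun f hf g hg => not_colAdj_of_upFace_iff hL
      (iff_of_true (Finset.mem_filter.1 hf).2 (Finset.mem_filter.1 hg).2), card_filter_upFace]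
  have hdown : wInner (downState σ) (downState σ) = (4 : ℂ) ^ (2 * L) := by
    rw [downState, hσ.wInner_prod_self _ fun f hf g hg => not_colAdj_of_upFace_iff hL
      (iff_of_false (Finset.mem_filter.1 hf).2 (Finset.mem_filter.1 hg).2), card_filter_not_upFace]
  have hlt := hσ.norm_wInner_upState_downState_lt
  have hdet : 0 < (4 : ℝ) ^ (2 * L) * (4 : ℝ) ^ (2 * L)
      - ‖wInner (upState σ) (downState σ)‖ ^ 2 := by
    nlinarith [norm_nonneg (wInner (upState σ) (downState σ))]
  refine ⟨hup, hdown, hlt, hdet, linearIndependent_pair_of_wInner_det_ne_zero ?_⟩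
  rw [hup, hdown, wInner_swap (upState σ), Complex.mul_conj']
  exact_mod_cast hdet.ne'

/-- For a closed column of faces `aᵢ, bᵢ, cᵢ, dᵢ` (`i = 1,…,L₁` cyclic,
`L₁` even, `≥ 2`) with face operators `b_f† = ∑_e σ_f(e) b_e†` satisfying
`[b_f, b_f†] = 4`, `[b_f, b_g†] = -1` for adjacent faces and `0` otherwise, the two
rotated states satisfy `⟨↑|↑⟩ = ⟨↓|↓⟩ = 4^(2L₁)` and `|⟨↑|↓⟩| < 4^(2L₁)`; consequently
the Gram matrix of `{|↑⟩, |↓⟩}` has positive determinant, and the two states are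
linearly independent. -/
theorem column_rotation_lin_indep {E : Type*} [Fintype E] [DecidableEq E]
    (L : ℕ) [NeZero L] (hL : Even L) (hL2 : 2 ≤ L)
    (σ : ColFace L → E → ℤ)
    (hval : ∀ f e, σ f e = -1 ∨ σ f e = 0 ∨ σ f e = 1)
    (hsupp : ∀ f, ({e | σ f e ≠ 0} : Set E).ncard = 4)
    (hcomm : ∀ f g : ColFace L, (∑ e : E, σ f e * σ g e) =
      if f = g then 4 else if colAdj f g then -1 else 0) :
    wInner (upState σ) (upState σ) = (4 : ℂ) ^ (2 * L) ∧
    wInner (downState σ) (downState σ) = (4 : ℂ) ^ (2 * L) ∧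
    ‖wInner (upState σ) (downState σ)‖ < 4 ^ (2 * L) ∧
    0 < (4 : ℝ) ^ (2 * L) * (4 : ℝ) ^ (2 * L)
        - ‖wInner (upState σ) (downState σ)‖ ^ 2 ∧
    LinearIndependent ℂ ![upState σ, downState σ] :=
  column_rotation_lin_indep_general L hL σ hcomm
end

section
/- Every 4-cycle decomposition of the 2-torus grid C_L □ C_{L'} (L, L' even, ≥ 6) into vertex-disjoint faces covering all vertices restricts the possible configurations: if a face with lower-left corner (i,j) belongs to the packing, then either all faces in the same pair of rows are translates by multiples of 2 in the horizontal direction, or all faces in the same pair of columns are translates by multiples of 2 in the vertical direction (no 'diagonal' adjacent placement (i+1,j+1) or (i+1,j-1) relative to an adjacent face is possible). -/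
lemma mem_faceVerts {L L' : ℕ} {a : ZMod L} {b : ZMod L'} {v : ZMod L × ZMod L'} :
    v ∈ faceVerts a b ↔ (v.1 = a ∨ v.1 = a + 1) ∧ (v.2 = b ∨ v.2 = b + 1) := by
  obtain ⟨x, y⟩ := v
  simp only [faceVerts, Set.mem_insert_iff, Set.mem_singleton_iff, Prod.mk.injEq]
  tauto

lemma zmod_ne_zero {L : ℕ} (hL : 6 ≤ L) {n : ℕ} (h0 : 0 < n) (h5 : n < 6) : (n : ZMod L) ≠ 0 := by
  haveI : NeZero L := ⟨by omega⟩
  intro h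
  have h2 := (ZMod.natCast_eq_zero_iff n L).mp h
  have := Nat.le_of_dvd h0 h2
  omega

lemma one_ne {L : ℕ} (hL : 6 ≤ L) : (1 : ZMod L) ≠ 0 := by
  have := zmod_ne_zero (n := 1) hL one_pos (by norm_num); simpa using this

lemma two_ne {L : ℕ} (hL : 6 ≤ L) : (2 : ZMod L) ≠ 0 := by
  have := zmod_ne_zero (n := 2) hL (by norm_num) (by norm_num); simpa using this

lemma corner_inj {L L' : ℕ} (hL : 6 ≤ L) (hL' : 6 ≤ L') {a c : ZMod L} {b d : ZMod L'}
    (h : faceVerts a b = faceVerts c d) : a = c ∧ b = d := by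
  have h1 : ((a, b) : ZMod L × ZMod L') ∈ faceVerts c d := by
    rw [← h]; exact mem_faceVerts.mpr ⟨Or.inl rfl, Or.inl rfl⟩
  have h2 : ((c, d) : ZMod L × ZMod L') ∈ faceVerts a b := by
    rw [h]; exact mem_faceVerts.mpr ⟨Or.inl rfl, Or.inl rfl⟩
  rw [mem_faceVerts] at h1 h2
  constructor
  · rcases h1.1 with h' | h'
    · exact h'
    · rcases h2.1 with h'' | h''
      · exact absurd (show (1 : ZMod L) = 0 by linear_combination -h' - h'') (one_ne hL)
      · exact absurd (show (2 : ZMod L) = 0 by linear_combination -h' - h'') (two_ne hL)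
  · rcases h1.2 with h' | h'
    · exact h'
    · rcases h2.2 with h'' | h''
      · exact absurd (show (1 : ZMod L') = 0 by linear_combination -h' - h'') (one_ne hL')
      · exact absurd (show (2 : ZMod L') = 0 by linear_combination -h' - h'') (two_ne hL')

lemma face_uniq {L L' : ℕ} {F : Set (Set (ZMod L × ZMod L'))}
    (hF : IsPerfectFacePacking L L' F) {s t} (hs : s ∈ F) (ht : t ∈ F)
    {v} (hvs : v ∈ s) (hvt : v ∈ t) : s = t :=
  (hF.2 v).unique ⟨hs, hvs⟩ ⟨ht, hvt⟩

lemma clash {L L' : ℕ} {F : Set (Set (ZMod L × ZMod L'))}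
    (hF : IsPerfectFacePacking L L' F) (hL : 6 ≤ L) (hL' : 6 ≤ L')
    {a c : ZMod L} {b d : ZMod L'} (h1 : faceVerts a b ∈ F) (h2 : faceVerts c d ∈ F)
    {x : ZMod L} {y : ZMod L'}
    (hx1 : x = a ∨ x = a + 1) (hy1 : y = b ∨ y = b + 1)
    (hx2 : x = c ∨ x = c + 1) (hy2 : y = d ∨ y = d + 1) : a = c ∧ b = d :=
  corner_inj hL hL' (face_uniq hF h1 h2
    (mem_faceVerts.mpr ⟨hx1, hy1⟩ : (x, y) ∈ _) (mem_faceVerts.mpr ⟨hx2, hy2⟩))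

lemma cover_pt {L L' : ℕ} {F : Set (Set (ZMod L × ZMod L'))}
    (hF : IsPerfectFacePacking L L' F) (v : ZMod L × ZMod L') :
    ∃ a b, faceVerts a b ∈ F ∧ (v.1 = a ∨ v.1 = a + 1) ∧ (v.2 = b ∨ v.2 = b + 1) := by
  obtain ⟨s, ⟨hs, hv⟩, -⟩ := hF.2 v
  obtain ⟨a, b, rfl⟩ := hF.1 s hs
  exact ⟨a, b, hs, mem_faceVerts.mp hv⟩

/-- The face covering the vertex two to the right of a corner is either aligned
or shifted down by one. -/
lemma coverRight {L L' : ℕ} {F : Set (Set (ZMod L × ZMod L'))}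
    (hF : IsPerfectFacePacking L L' F) (hL : 6 ≤ L) (hL' : 6 ≤ L')
    {a : ZMod L} {b : ZMod L'} (h : faceVerts a b ∈ F) :
    faceVerts (a + 2) b ∈ F ∨ faceVerts (a + 2) (b - 1) ∈ F := by
  obtain ⟨c, d, hP, hx, hy⟩ := cover_pt hF (a + 2, b)
  replace hx : a + 2 = c ∨ a + 2 = c + 1 := hx
  replace hy : b = d ∨ b = d + 1 := hy
  rcases hx with hx | hx
  · rcases hy with hy | hy
    · rw [← hx, ← hy] at hP; exact Or.inl hP
    · right
      have hd : d = b - 1 := by linear_combination -hy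
      rw [← hx, hd] at hP; exact hP
  · exfalso
    have hc : c = a + 1 := by linear_combination -hx
    have h' := (clash hF hL hL' h hP (x := a + 1) (y := b)
      (Or.inr rfl) (Or.inl rfl) (Or.inl hc.symm) hy).1
    exact one_ne hL (by linear_combination -h' - hc)

/-- Diagonal placement propagates: if `(a,b)` and `(a+2,b-1)` are corners, so is `(a+2,b+1)`. -/
lemma stepDiag {L L' : ℕ} {F : Set (Set (ZMod L × ZMod L'))}
    (hF : IsPerfectFacePacking L L' F) (hL : 6 ≤ L) (hL' : 6 ≤ L')
    {a : ZMod L} {b : ZMod L'} (h1 : faceVerts a b ∈ F)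
    (h2 : faceVerts (a + 2) (b - 1) ∈ F) : faceVerts (a + 2) (b + 1) ∈ F := by
  obtain ⟨c, d, hP, hx, hy⟩ := cover_pt hF (a + 2, b + 1)
  replace hx : a + 2 = c ∨ a + 2 = c + 1 := hx
  replace hy : b + 1 = d ∨ b + 1 = d + 1 := hy
  rcases hx with hx | hx
  · rcases hy with hy | hy
    · rw [← hx, ← hy] at hP; exact hP
    · exfalso
      have hd : d = b := by linear_combination -hy
      have h' := (clash hF hL hL' h2 hP (x := a + 2) (y := b)
        (Or.inl rfl) (Or.inr (by ring)) (Or.inl hx) (Or.inl hd.symm)).2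
      exact one_ne hL' (by linear_combination -h' - hd)
  · exfalso
    have hc : c = a + 1 := by linear_combination -hx
    have h' := (clash hF hL hL' h1 hP (x := a + 1) (y := b + 1)
      (Or.inr rfl) (Or.inr rfl) (Or.inl hc.symm) hy).1
    exact one_ne hL (by linear_combination -h' - hc)

/-- If `(a,b)` is a corner and some corner `(a+2,d)` covers `(a+2, b+2)`, then
`(a, b+2)` is a corner. -/
lemma stepUp {L L' : ℕ} {F : Set (Set (ZMod L × ZMod L'))}
    (hF : IsPerfectFacePacking L L' F) (hL : 6 ≤ L) (hL' : 6 ≤ L')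
    {a : ZMod L} {b d : ZMod L'} (h1 : faceVerts a b ∈ F)
    (h2 : faceVerts (a + 2) d ∈ F) (hd : b + 2 = d ∨ b + 2 = d + 1) :
    faceVerts a (b + 2) ∈ F := by
  obtain ⟨c, e, hP, hx, hy⟩ := cover_pt hF (a, b + 2)
  replace hx : a = c ∨ a = c + 1 := hx
  replace hy : b + 2 = e ∨ b + 2 = e + 1 := hy
  rcases hy with hy | hy
  · rcases hx with hx | hx
    · rw [← hx, ← hy] at hP; exact hP
    · exfalso
      obtain ⟨f, g, hQ, hx2, hy2⟩ := cover_pt hF (a + 1, b + 2)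
      replace hx2 : a + 1 = f ∨ a + 1 = f + 1 := hx2
      replace hy2 : b + 2 = g ∨ b + 2 = g + 1 := hy2
      rcases hy2 with hy2 | hy2
      · rcases hx2 with hx2 | hx2
        · -- f = a + 1 : face (a+1, b+2) shares (a+2, b+2) with face (a+2, d)
          have h' := (clash hF hL hL' hQ h2 (x := a + 2) (y := b + 2)
            (Or.inr (by rw [← hx2]; ring)) (Or.inl hy2) (Or.inl rfl) hd).1
          exact one_ne hL (by linear_combination -h' - hx2)
        · -- f = a : face (a, b+2) shares (a, b+2) with face (c, e) = (a-1, b+2)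
          have hf : f = a := by linear_combination -hx2
          have h' := (clash hF hL hL' hP hQ (x := a) (y := b + 2)
            (Or.inr hx) (Or.inl hy) (Or.inl hf.symm) (Or.inl hy2)).1
          exact one_ne hL (by linear_combination -h' - hf - hx)
      · -- g = b + 1 : face (f, b+1) shares (a+1, b+1) with face (a, b)
        have hg : g = b + 1 := by linear_combination -hy2
        have h' := (clash hF hL hL' h1 hQ (x := a + 1) (y := b + 1)
          (Or.inr rfl) (Or.inr rfl) hx2 (Or.inl hg.symm)).2
        exact one_ne hL' (by linear_combination -h' - hg)
  · -- e = b + 1 : face (c, b+1) shares (a, b+1) with face (a, b)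
    exfalso
    have he : e = b + 1 := by linear_combination -hy
    have h' := (clash hF hL hL' h1 hP (x := a) (y := b + 1)
      (Or.inl rfl) (Or.inr rfl) hx (Or.inl he.symm)).2
    exact one_ne hL' (by linear_combination -h' - he)

lemma stepD {L L' : ℕ} {F : Set (Set (ZMod L × ZMod L'))}
    (hF : IsPerfectFacePacking L L' F) (hL : 6 ≤ L) (hL' : 6 ≤ L')
    {a : ZMod L} {b : ZMod L'} (h1 : faceVerts a b ∈ F)
    (h2 : faceVerts (a + 2) (b - 1) ∈ F) :
    faceVerts a (b + 2) ∈ F ∧ faceVerts (a + 2) (b + 1) ∈ F := by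
  have hd := stepDiag hF hL hL' h1 h2
  exact ⟨stepUp hF hL hL' h1 hd (Or.inr (by ring)), hd⟩

lemma stepL {L L' : ℕ} {F : Set (Set (ZMod L × ZMod L'))}
    (hF : IsPerfectFacePacking L L' F) (hL : 6 ≤ L) (hL' : 6 ≤ L')
    {a : ZMod L} {b : ZMod L'} (h1 : faceVerts a b ∈ F)
    (h2 : faceVerts (a + 2) (b + 2) ∈ F) : faceVerts a (b + 2) ∈ F :=
  stepUp hF hL hL' h1 h2 (Or.inl rfl)

/-- From a full column tiling we conclude the vertical alternative. -/
lemma conclude_col {L L' : ℕ} {F : Set (Set (ZMod L × ZMod L'))}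
    (hF : IsPerfectFacePacking L L' F) (hL : 6 ≤ L) (hL' : 6 ≤ L')
    {i : ZMod L} {j : ZMod L'}
    (hcol : ∀ k : ℕ, faceVerts i (j + 2 * (k : ZMod L')) ∈ F) :
    ∀ s ∈ F, (∃ v ∈ s, v.1 = i ∨ v.1 = i + 1) →
      ∃ k : ℕ, s = faceVerts i (j + 2 * (k : ZMod L')) := by
  haveI : NeZero L' := ⟨by omega⟩
  rintro s hs ⟨v, hv, hvx⟩
  have hm : (((v.2 - j).val : ℕ) : ZMod L') = v.2 - j := by
    simp [ZMod.natCast_val, ZMod.cast_id]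
  rcases Nat.even_or_odd (v.2 - j).val with ⟨k, hk⟩ | ⟨k, hk⟩
  · refine ⟨k, face_uniq hF hs (hcol k) hv (mem_faceVerts.mpr ⟨hvx, Or.inl ?_⟩)⟩
    have : v.2 = j + (((v.2 - j).val : ℕ) : ZMod L') := by rw [hm]; ring
    rw [this, hk]; push_cast; ring
  · refine ⟨k, face_uniq hF hs (hcol k) hv (mem_faceVerts.mpr ⟨hvx, Or.inr ?_⟩)⟩
    have : v.2 = j + (((v.2 - j).val : ℕ) : ZMod L') := by rw [hm]; ring
    rw [this, hk]; push_cast; ring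

/-- From a full row tiling we conclude the horizontal alternative. -/
lemma conclude_row {L L' : ℕ} {F : Set (Set (ZMod L × ZMod L'))}
    (hF : IsPerfectFacePacking L L' F) (hL : 6 ≤ L) (hL' : 6 ≤ L')
    {i : ZMod L} {j : ZMod L'}
    (hrow : ∀ k : ℕ, faceVerts (i + 2 * (k : ZMod L)) j ∈ F) :
    ∀ s ∈ F, (∃ v ∈ s, v.2 = j ∨ v.2 = j + 1) →
      ∃ k : ℕ, s = faceVerts (i + 2 * (k : ZMod L)) j := by
  haveI : NeZero L := ⟨by omega⟩
  rintro s hs ⟨v, hv, hvy⟩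
  have hm : (((v.1 - i).val : ℕ) : ZMod L) = v.1 - i := by
    simp [ZMod.natCast_val, ZMod.cast_id]
  rcases Nat.even_or_odd (v.1 - i).val with ⟨k, hk⟩ | ⟨k, hk⟩
  · refine ⟨k, face_uniq hF hs (hrow k) hv (mem_faceVerts.mpr ⟨Or.inl ?_, hvy⟩)⟩
    have : v.1 = i + (((v.1 - i).val : ℕ) : ZMod L) := by rw [hm]; ring
    rw [this, hk]; push_cast; ring
  · refine ⟨k, face_uniq hF hs (hrow k) hv (mem_faceVerts.mpr ⟨Or.inr ?_, hvy⟩)⟩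
    have : v.1 = i + (((v.1 - i).val : ℕ) : ZMod L) := by rw [hm]; ring
    rw [this, hk]; push_cast; ring

/-- Rigidity of perfect face packings of the 2-torus grid (`L, L'` even,
`≥ 6`): if the face with lower-left corner `(i, j)` belongs to the packing, then either
every face of the packing meeting the pair of rows `{j, j+1}` is a horizontal translate
of it by a multiple of 2, or every face of the packing meeting the pair of columns
`{i, i+1}` is a vertical translate of it by a multiple of 2. In particular no
'diagonal' placement of adjacent faces is possible. -/
theorem torus_face_packing_rigidity (L L' : ℕ)
    (heL : Even L) (heL' : Even L') (hL : 6 ≤ L) (hL' : 6 ≤ L')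
    (F : Set (Set (ZMod L × ZMod L'))) (hF : IsPerfectFacePacking L L' F)
    (i : ZMod L) (j : ZMod L') (hij : faceVerts i j ∈ F) :
    (∀ s ∈ F, (∃ v ∈ s, v.2 = j ∨ v.2 = j + 1) →
        ∃ k : ℕ, s = faceVerts (i + 2 * (k : ZMod L)) j) ∨
    (∀ s ∈ F, (∃ v ∈ s, v.1 = i ∨ v.1 = i + 1) →
        ∃ k : ℕ, s = faceVerts i (j + 2 * (k : ZMod L'))) := by
  classical
  by_cases hS : ∀ k : ℕ, faceVerts (i + 2 * (k : ZMod L)) j ∈ F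
  · exact Or.inl (conclude_row hF hL hL' hS)
  · right
    push_neg at hS
    -- minimal counterexample along the row walk
    have hn0 : Nat.find hS ≠ 0 := by
      intro h0
      have := Nat.find_spec hS
      rw [h0] at this
      exact this (by simpa using hij)
    obtain ⟨m, hm⟩ := Nat.exists_eq_succ_of_ne_zero hn0
    have chain : ∀ t : ℕ, t ≤ m → faceVerts (i + 2 * (t : ZMod L)) j ∈ F := by
      intro t ht
      by_contra hc
      exact absurd hm (by have := Nat.find_min' hS hc; omega)
    have hbreak : faceVerts (i + 2 * ((m + 1 : ℕ) : ZMod L)) j ∉ F := by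
      have h := Nat.find_spec hS
      rw [hm] at h
      simpa [Nat.succ_eq_add_one] using h
    -- the break forces a diagonal placement
    have hD : faceVerts (i + 2 * (m : ZMod L) + 2) (j - 1) ∈ F := by
      rcases coverRight hF hL hL' (chain m le_rfl) with h | h
      · exfalso
        apply hbreak
        have e : i + 2 * ((m + 1 : ℕ) : ZMod L) = i + 2 * (m : ZMod L) + 2 := by
          push_cast; ring
        rw [e]; exact h
      · exact h
    -- the column pair at i + 2m is fully vertically tiled
    have colT : ∀ k : ℕ, faceVerts (i + 2 * (m : ZMod L)) (j + 2 * (k : ZMod L')) ∈ F ∧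
        faceVerts (i + 2 * (m : ZMod L) + 2) (j + 2 * (k : ZMod L') - 1) ∈ F := by
      intro k
      induction k with
      | zero => exact ⟨by simpa using chain m le_rfl, by simpa using hD⟩
      | succ k ih =>
        have h' := stepD hF hL hL' ih.1 ih.2
        have e1 : j + 2 * ((k + 1 : ℕ) : ZMod L') = j + 2 * (k : ZMod L') + 2 := by
          push_cast; ring
        have e2 : j + 2 * ((k + 1 : ℕ) : ZMod L') - 1 = j + 2 * (k : ZMod L') + 1 := by
          push_cast; ring
        exact ⟨by rw [e1]; exact h'.1, by rw [e2]; exact h'.2⟩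
    -- propagate the vertical tiling leftwards back to column i
    have prop : ∀ t : ℕ, t ≤ m →
        ∀ k : ℕ, faceVerts (i + 2 * ((m - t : ℕ) : ZMod L)) (j + 2 * (k : ZMod L')) ∈ F := by
      intro t
      induction t with
      | zero => intro _ k; simpa using (colT k).1
      | succ t ih =>
        intro ht k
        have prev := ih (by omega)
        have hA : i + 2 * ((m - (t + 1) : ℕ) : ZMod L) + 2
            = i + 2 * ((m - t : ℕ) : ZMod L) := by
          have : (m - t : ℕ) = (m - (t + 1) : ℕ) + 1 := by omega
          rw [this]; push_cast; ring
        induction k with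
        | zero => simpa using chain (m - (t + 1)) (by omega)
        | succ k ihk =>
          have h2 : faceVerts (i + 2 * ((m - (t + 1) : ℕ) : ZMod L) + 2)
              (j + 2 * (k : ZMod L') + 2) ∈ F := by
            have := prev (k + 1)
            rw [hA]
            have e1 : j + 2 * ((k + 1 : ℕ) : ZMod L') = j + 2 * (k : ZMod L') + 2 := by
              push_cast; ring
            rwa [e1] at this
          have := stepL hF hL hL' ihk h2
          have e1 : j + 2 * ((k + 1 : ℕ) : ZMod L') = j + 2 * (k : ZMod L') + 2 := by
            push_cast; ring
          rwa [e1]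
    have colI : ∀ k : ℕ, faceVerts i (j + 2 * (k : ZMod L')) ∈ F := by
      intro k
      have := prop m le_rfl k
      simpa using this
    exact conclude_col hF hL hL' colI
end
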